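/- arXiv:2105.13834 — 8 statements merged into one kernel-verified Lean document; each statement's English description precedes it below -/
import Mathlib

section
/- Dobiński's formula: for every positive integer n, the Bell number B_n equals e^{-1} \sum_{k=0}^{\infty} k^n / k!, where the series converges and the equality is between real numbers. -/
/-!
Sorting the partitions of a finite set by the block containing a fixed element `a` shows that
their number satisfies the recurrence `B (n + 1) = ∑ i ≤ n, (n choose i) * B (n - i)` defining
`Nat.bell`: a block `insert a t` with `#t = i` leaves a partition of the remaining `n - i`
elements. On the analytic side, `(k + 1) ^ (n + 1) / (k + 1)! = (1 + k) ^ n / k!`, so expanding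
`(1 + k) ^ n` binomially shows that `S n = ∑ k ^ n / k!` satisfies the same recurrence, with
`S 0 = e`.
-/

open Finset
open scoped Nat

namespace Finpartition

variable {α : Type*} [DecidableEq α]

lemma parts_avoid_of_mem {s t : Finset α} (P : Finpartition s) (ht : t ∈ P.parts) :
    (P.avoid t).parts = P.parts.erase t := by
  ext u
  rw [mem_avoid, mem_erase]
  constructor
  · rintro ⟨d, hd, hdt, rfl⟩
    have hne : d ≠ t := by rintro rfl; exact hdt le_rfl
    have hdisj : Disjoint d t := P.disjoint hd ht hne
    rw [sdiff_eq_self_of_disjoint hdisj]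
    exact ⟨hne, hd⟩
  · rintro ⟨hne, hu⟩
    have hdisj : Disjoint u t := P.disjoint hu ht hne
    refine ⟨u, hu, fun hle => P.ne_bot hu ?_, sdiff_eq_self_of_disjoint hdisj⟩
    exact (hdisj.mono_right hle).eq_bot_of_le le_rfl

def partFiberEquiv {u b : Finset α} {a : α} (hab : a ∈ b) (hbu : b ⊆ u) :
    {P : Finpartition u // P.part a = b} ≃ Finpartition (u \ b) where
  toFun P := P.1.avoid b
  invFun Q := ⟨Q.extend (ne_empty_of_mem hab) disjoint_sdiff_self_left (sdiff_sup_cancel hbu),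
    part_eq_of_mem _ (mem_insert_self _ _) hab⟩
  left_inv := by
    rintro ⟨P, rfl⟩
    have hmem : P.part a ∈ P.parts := P.part_mem.2 (hbu hab)
    ext1; ext1
    rw [extend_parts, parts_avoid_of_mem P hmem, insert_erase hmem]
  right_inv Q := by
    ext1
    rw [parts_avoid_of_mem _ (mem_insert_self _ _), extend_parts, erase_insert]
    intro hb
    exact Q.ne_bot hb (disjoint_self.1 (disjoint_sdiff_self_left.mono_left (Q.le hb)))

lemma card_eq_sum_card_sdiff {u : Finset α} {a : α} (ha : a ∈ u) :
    Fintype.card (Finpartition u) =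
      ∑ b ∈ u.powerset with a ∈ b, Fintype.card (Finpartition (u \ b)) := by
  rw [← Finset.card_univ, card_eq_sum_card_fiberwise (f := fun P => P.part a)]
  · refine sum_congr rfl fun b hb => ?_
    obtain ⟨hbu, hab⟩ := mem_filter.1 hb
    rw [← Fintype.card_congr (partFiberEquiv hab (mem_powerset.1 hbu)), Fintype.card_subtype]
  · intro P _
    simp [part_subset, ha]

theorem card_eq_bell (u : Finset α) : Fintype.card (Finpartition u) = Nat.bell #u := by
  induction u using Finset.strongInduction with | H u ih
  obtain rfl | ⟨a, ha⟩ := u.eq_empty_or_nonempty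
  · exact Fintype.card_unique (α := Finpartition (⊥ : Finset α)) |>.trans Nat.bell_zero.symm
  obtain ⟨s, has, rfl⟩ : ∃ s, a ∉ s ∧ u = insert a s := ⟨u.erase a, notMem_erase a u,
    (insert_erase ha).symm⟩
  calc Fintype.card (Finpartition (insert a s))
      = ∑ b ∈ (insert a s).powerset with a ∈ b, Nat.bell #(insert a s \ b) := by
        rw [card_eq_sum_card_sdiff ha]
        refine sum_congr rfl fun b hb => ?_
        obtain ⟨hbu, hab⟩ := mem_filter.1 hb
        exact ih _ (sdiff_ssubset (mem_powerset.1 hbu) ⟨a, hab⟩)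
    _ = ∑ t ∈ s.powerset, Nat.bell (#s - #t) := by
        rw [sum_filter, sum_powerset_insert has,
          sum_eq_zero fun t ht => if_neg fun hat => has (mem_powerset.1 ht hat), zero_add]
        refine sum_congr rfl fun t ht => ?_
        rw [if_pos (mem_insert_self a t), insert_sdiff_insert, sdiff_insert_of_notMem has,
          card_sdiff_of_subset (mem_powerset.1 ht)]
    _ = ∑ i ∈ range (#s + 1), (#s).choose i * Nat.bell (#s - i) := by
        simp only [sum_powerset_apply_card (fun i => Nat.bell (#s - i)), smul_eq_mul]
    _ = Nat.bell #(insert a s) := by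
        rw [card_insert_of_notMem has, Nat.bell_succ, Nat.range_succ_eq_Iic]

end Finpartition

lemma add_one_pow_succ_div_factorial_succ {K : Type*} [Field K] [CharZero K] (n k : ℕ) :
    ((k : K) + 1) ^ (n + 1) / (k + 1)! = ((k : K) + 1) ^ n / k ! := by
  rw [Nat.factorial_succ, pow_succ]
  push_cast
  field_simp

theorem hasSum_pow_div_factorial (n : ℕ) :
    HasSum (fun k : ℕ => (k : ℝ) ^ n / k !) (Real.exp 1 * Nat.bell n) := by
  induction n using Nat.strong_induction_on with | _ n ih
  cases n with
  | zero => simpa [Real.exp_eq_exp_ℝ] using NormedSpace.expSeries_div_hasSum_exp (1 : ℝ)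
  | succ n =>
    have hterms : HasSum
        (fun k : ℕ => ∑ i ∈ range (n + 1), (n.choose i : ℝ) * ((k : ℝ) ^ (n - i) / k !))
        (∑ i ∈ range (n + 1), (n.choose i : ℝ) * (Real.exp 1 * Nat.bell (n - i))) :=
      hasSum_sum fun i _ => (ih (n - i) (by omega)).mul_left _
    have hshift (k : ℕ) : ((k : ℝ) + 1) ^ (n + 1) / (k + 1)! =
        ∑ i ∈ range (n + 1), (n.choose i : ℝ) * ((k : ℝ) ^ (n - i) / k !) := by
      rw [add_one_pow_succ_div_factorial_succ, add_comm (k : ℝ) 1, add_pow, sum_div]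
      refine sum_congr rfl fun i _ => ?_
      ring
    have hbell : Real.exp 1 * Nat.bell (n + 1) =
        ∑ i ∈ range (n + 1), (n.choose i : ℝ) * (Real.exp 1 * Nat.bell (n - i)) := by
      rw [Nat.bell_succ, ← Nat.range_succ_eq_Iic, Nat.cast_sum, mul_sum]
      refine sum_congr rfl fun i _ => ?_
      push_cast
      ring
    rw [← hasSum_nat_add_iff' 1]
    simpa [hshift, hbell] using hterms

theorem dobinski_formula_general (n : ℕ) :
    Summable (fun k : ℕ => (k : ℝ) ^ n / (Nat.factorial k : ℝ)) ∧
    ((Nat.card (Finpartition (Finset.univ : Finset (Fin n))) : ℝ) =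
      (Real.exp 1)⁻¹ * ∑' k : ℕ, (k : ℝ) ^ n / (Nat.factorial k : ℝ)) := by
  have hsum := hasSum_pow_div_factorial n
  refine ⟨hsum.summable, ?_⟩
  rw [hsum.tsum_eq, inv_mul_cancel_left₀ (Real.exp_ne_zero 1), Nat.card_eq_fintype_card,
    Finpartition.card_eq_bell, card_univ, Fintype.card_fin]

/-- Dobiński's formula: the Bell number `B n`, defined as the number of partitions of a
set with `n` elements into nonempty pairwise disjoint subsets, equals
`e⁻¹ ∑_{k=0}^∞ k^n / k!`, and this series converges. -/
theorem dobinski_formula (n : ℕ) (hn : 1 ≤ n) :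
    Summable (fun k : ℕ => (k : ℝ) ^ n / (Nat.factorial k : ℝ)) ∧
    ((Nat.card (Finpartition (Finset.univ : Finset (Fin n))) : ℝ) =
      (Real.exp 1)⁻¹ * ∑' k : ℕ, (k : ℝ) ^ n / (Nat.factorial k : ℝ)) :=
  dobinski_formula_general n
end

section
/- Weak law of large numbers for cycle counts: let N^{(n)}(σ) denote the total number of cycles of a permutation σ of {1,...,n} (fixed points counting as cycles of length 1). Under the uniform probability measure P_n on the symmetric group S_n, N^{(n)}/log n converges in probability to 1; that is, for every ε > 0, lim_{n→∞} P_n(|N^{(n)}/log n − 1| ≥ ε) = 0. -/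
/-!
Every permutation of `Fin (n + 1)` is `decomposeFin.symm (p, e)`: it sends `0` to `p` and acts
like `e : Perm (Fin n)` on the rest. For `p = 0` the point `0` is a new fixed point; otherwise
multiplying by `swap 0 p` cuts `0` out of its cycle and adds exactly one cycle, so `0` was
inserted into an existing cycle of `e`. Hence the number `N` of cycles of a uniform permutation
of `Fin (n + 1)` is `N' + 1` with probability `1 / (n + 1)` and `N'` otherwise, which gives
`E N = H_n` and `E N² ≤ H_n² + H_n` by induction. Since `log n ≤ H_n ≤ 1 + log n`, the second
moment of `N` about `log n` is `O(log n)`, and Chebyshev's inequality bounds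
`P(|N / log n - 1| ≥ ε)` by `O(1 / (ε² log n))`.
-/

open Filter

/-- The total number of cycles of a permutation `σ` of `Fin n`: orbits of size at least two
are counted by `σ.cycleType`, and fixed points count as cycles of length 1. -/
def totalCycleCount {n : ℕ} (σ : Equiv.Perm (Fin n)) : ℕ :=
  Multiset.card σ.cycleType + (Finset.univ.filter fun x => σ x = x).card

open Finset Real
open scoped Nat

lemma Finset.card_filter_le_abs_sub_mul_sq_le_sum_sq {ι : Type*} (s : Finset ι) (f : ι → ℝ)
    (m : ℝ) {δ : ℝ} (hδ : 0 ≤ δ) :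
    #{i ∈ s | δ ≤ |f i - m|} * δ ^ 2 ≤ ∑ i ∈ s, (f i - m) ^ 2 := by
  calc #{i ∈ s | δ ≤ |f i - m|} * δ ^ 2 = ∑ _ ∈ s.filter (δ ≤ |f · - m|), δ ^ 2 := by
        rw [sum_const, nsmul_eq_mul]
    _ ≤ ∑ i ∈ s.filter (δ ≤ |f · - m|), (f i - m) ^ 2 :=
        sum_le_sum fun i hi => by simpa using pow_le_pow_left₀ hδ (mem_filter.mp hi).2 2
    _ ≤ ∑ i ∈ s, (f i - m) ^ 2 :=
        sum_le_sum_of_subset_of_nonneg (filter_subset _ _) fun _ _ _ => sq_nonneg _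

namespace Equiv.Perm

section NumCycles

variable {α : Type*} [Fintype α] [DecidableEq α]

/-- The parts of `σ.partition` are the lengths of all cycles of `σ`, fixed points included. -/
def numCycles (σ : Perm α) : ℕ := Multiset.card σ.partition.parts

lemma numCycles_eq (σ : Perm α) :
    σ.numCycles = Multiset.card σ.cycleType + (Fintype.card α - #σ.support) := by
  simp [numCycles, parts_partition]

@[simp]
lemma numCycles_one : (1 : Perm α).numCycles = Fintype.card α := by
  simp [numCycles_eq]

lemma IsCycle.numCycles_eq {c : Perm α} (hc : c.IsCycle) :
    c.numCycles = Fintype.card α - #c.support + 1 := by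
  rw [Perm.numCycles_eq, hc.cycleType, Multiset.card_singleton, add_comm]

lemma Disjoint.numCycles_mul {f g : Perm α} (h : f.Disjoint g) :
    (f * g).numCycles + Fintype.card α = f.numCycles + g.numCycles := by
  have hsupp : #(f * g).support = #f.support + #g.support := by
    rw [h.support_mul, card_union_of_disjoint h.disjoint_support]
  have hle := (f * g).support.card_le_univ
  simp only [Perm.numCycles_eq, h.cycleType_mul, Multiset.card_add]
  omega

lemma IsCycle.numCycles_swap_mul {c : Perm α} (hc : c.IsCycle) {x : α} (hx : c x ≠ x) :
    (swap x (c x) * c).numCycles = c.numCycles + 1 := by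
  have hle := c.support.card_le_univ
  rw [hc.numCycles_eq]
  by_cases hcc : c (c x) = x
  · have hswap : c = swap x (c x) := hc.eq_swap_of_apply_apply_eq_self hx hcc
    have htwo : #c.support = 2 := by rw [hswap, card_support_swap hx.symm]
    have hone : swap x (c x) * c = 1 := by
      rw [mul_eq_one_iff_inv_eq, swap_inv]; exact hswap.symm
    rw [hone, numCycles_one]
    omega
  · have hx' : x ∈ c.support := mem_support.mpr hx
    have hcard : #(swap x (c x) * c).support = #c.support - 1 := by
      rw [support_swap_mul_eq c x hcc, card_sdiff_of_subset (by simpa using hx'), card_singleton]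
    have hpos := card_pos.mpr ⟨x, hx'⟩
    rw [(hc.swap_mul hx hcc).numCycles_eq, hcard]
    omega

lemma numCycles_swap_mul {σ : Perm α} {x : α} (hx : σ x ≠ x) :
    (swap x (σ x) * σ).numCycles = σ.numCycles + 1 := by
  -- `σ = (σ * c⁻¹) * c` with `c` the cycle through `x`; the swap commutes with the first
  -- factor, so only `c` is affected.
  set c := σ.cycleOf x
  have hc : c.IsCycle := isCycle_cycleOf σ hx
  have hcx : c x = σ x := cycleOf_apply_self σ x
  have hdisj : (σ * c⁻¹).Disjoint c :=
    disjoint_mul_inv_of_mem_cycleFactorsFinset (cycleOf_mem_cycleFactorsFinset_iff.mpr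
      (mem_support.mpr hx))
  have hsub : (swap x (c x) * c).support ⊆ c.support := fun y hy =>
    (mem_support_swap_mul_imp_mem_support_ne hy).1
  have hdisj' : (σ * c⁻¹).Disjoint (swap x (c x) * c) :=
    disjoint_iff_disjoint_support.mpr (hdisj.disjoint_support.mono_right hsub)
  have hfix : ∀ y ∈ c.support, (σ * c⁻¹) y = y := fun y hy =>
    notMem_support.mp (Finset.disjoint_right.mp hdisj.disjoint_support hy)
  have hx' : x ∈ c.support := mem_support.mpr (hcx ▸ hx)
  have hcomm : swap x (σ x) * (σ * c⁻¹) = (σ * c⁻¹) * swap x (σ x) := by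
    rw [mul_swap_eq_swap_mul, ← hcx, hfix x hx', hfix (c x) (apply_mem_support.mpr hx')]
  have hsplit : swap x (σ x) * σ = (σ * c⁻¹) * (swap x (c x) * c) := by
    rw [hcx, ← mul_assoc, ← hcomm, mul_assoc, inv_mul_cancel_right]
  have h1 := hdisj.numCycles_mul
  have h2 := hdisj'.numCycles_mul
  rw [inv_mul_cancel_right] at h1
  rw [hc.numCycles_swap_mul (hcx ▸ hx)] at h2
  rw [hsplit]
  omega

end NumCycles

lemma decomposeFin_symm_zero {n : ℕ} (e : Perm (Fin n)) :
    decomposeFin.symm (0, e) = e.extendDomain (finSuccAboveEquiv 0) := by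
  ext1 x
  induction x using Fin.cases with
  | zero => rw [decomposeFin_symm_apply_zero, extendDomain_apply_not_subtype _ _ (by simp)]
  | succ i =>
    rw [decomposeFin_symm_apply_succ, swap_self, refl_apply]
    have h := extendDomain_apply_image e (finSuccAboveEquiv 0) i
    simp only [finSuccAboveEquiv_apply, Fin.succAbove_zero] at h
    exact h.symm

lemma decomposeFin_symm_eq_swap_mul {n : ℕ} (p : Fin (n + 1)) (e : Perm (Fin n)) :
    decomposeFin.symm (p, e) = swap 0 p * decomposeFin.symm (0, e) := by
  ext1 x
  induction x using Fin.cases <;>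
    simp [decomposeFin_symm_apply_zero, decomposeFin_symm_apply_succ]

lemma numCycles_decomposeFin_symm_zero {n : ℕ} (e : Perm (Fin n)) :
    (decomposeFin.symm (0, e)).numCycles = e.numCycles + 1 := by
  have hle := e.support.card_le_univ
  simp only [decomposeFin_symm_zero, numCycles_eq, cycleType_extendDomain,
    card_support_extend_domain, Fintype.card_fin] at hle ⊢
  omega

lemma numCycles_decomposeFin_symm_of_ne_zero {n : ℕ} {p : Fin (n + 1)} (hp : p ≠ 0)
    (e : Perm (Fin n)) : (decomposeFin.symm (p, e)).numCycles = e.numCycles := by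
  have h := numCycles_swap_mul (σ := decomposeFin.symm (p, e)) (x := 0)
    (by rwa [decomposeFin_symm_apply_zero])
  rw [decomposeFin_symm_apply_zero] at h
  nth_rw 1 [decomposeFin_symm_eq_swap_mul] at h
  rw [swap_mul_self_mul, numCycles_decomposeFin_symm_zero] at h
  omega

lemma sum_numCycles_perm_fin_succ {M : Type*} [AddCommMonoid M] (F : ℕ → M) (n : ℕ) :
    ∑ σ : Perm (Fin (n + 1)), F σ.numCycles =
      ∑ e : Perm (Fin n), (F (e.numCycles + 1) + n • F e.numCycles) := by
  rw [← decomposeFin.symm.sum_comp, Fintype.sum_prod_type, Fin.sum_univ_succ]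
  simp only [numCycles_decomposeFin_symm_zero,
    numCycles_decomposeFin_symm_of_ne_zero (Fin.succ_ne_zero _), sum_const, Finset.card_univ,
    Fintype.card_fin, sum_comm (γ := Fin n), sum_add_distrib]

lemma sum_numCycles (n : ℕ) :
    ∑ σ : Perm (Fin n), (σ.numCycles : ℝ) = n ! * harmonic n := by
  induction n with
  | zero => simp [Subsingleton.elim _ (1 : Perm (Fin 0))]
  | succ n ih =>
    rw [sum_numCycles_perm_fin_succ (fun k => (k : ℝ))]
    simp only [Nat.cast_add, Nat.cast_one, nsmul_eq_mul]
    rw [sum_congr rfl fun e _ => show (e.numCycles + 1 : ℝ) + n * e.numCycles =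
      (n + 1) * e.numCycles + 1 by ring]
    rw [sum_add_distrib, ← mul_sum, ih, sum_const, Finset.card_univ, Fintype.card_perm,
      Fintype.card_fin, nsmul_eq_mul, mul_one, harmonic_succ, Nat.factorial_succ]
    push_cast
    field_simp

lemma sum_numCycles_sq_le (n : ℕ) :
    ∑ σ : Perm (Fin n), (σ.numCycles : ℝ) ^ 2 ≤ n ! * (harmonic n ^ 2 + harmonic n) := by
  induction n with
  | zero => simp [Subsingleton.elim _ (1 : Perm (Fin 0))]
  | succ n ih =>
    rw [sum_numCycles_perm_fin_succ (fun k => (k : ℝ) ^ 2)]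
    simp only [Nat.cast_add, Nat.cast_one, nsmul_eq_mul]
    rw [sum_congr rfl fun e _ => show (e.numCycles + 1 : ℝ) ^ 2 + n * e.numCycles ^ 2 =
      (n + 1) * e.numCycles ^ 2 + 2 * e.numCycles + 1 by ring]
    rw [sum_add_distrib, sum_add_distrib, ← mul_sum, ← mul_sum, sum_numCycles, sum_const,
      Finset.card_univ, Fintype.card_perm, Fintype.card_fin, nsmul_eq_mul, mul_one,
      harmonic_succ, Nat.factorial_succ]
    push_cast
    have hn : (0 : ℝ) < n + 1 := by positivity
    have : 0 ≤ (n ! : ℝ) / (n + 1) := by positivity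
    calc _ ≤ ((n : ℝ) + 1) * (n ! * (harmonic n ^ 2 + harmonic n)) + 2 * (n ! * harmonic n)
          + n ! := by gcongr
      _ ≤ _ := by field_simp; nlinarith

lemma sum_sq_numCycles_sub_log_le (n : ℕ) :
    ∑ σ : Perm (Fin n), ((σ.numCycles : ℝ) - log n) ^ 2 ≤ n ! * (log n + 2) := by
  have hlow : log n ≤ harmonic n := by
    simpa using log_le_harmonic_floor n n.cast_nonneg
  have hup := harmonic_le_one_add_log n
  have hexpand : ∑ σ : Perm (Fin n), ((σ.numCycles : ℝ) - log n) ^ 2 =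
      ∑ σ : Perm (Fin n), (σ.numCycles : ℝ) ^ 2
        - 2 * log n * ∑ σ : Perm (Fin n), (σ.numCycles : ℝ) + n ! * log n ^ 2 := by
    simp only [sub_sq, sum_add_distrib, sum_sub_distrib, ← sum_mul, ← mul_sum, sum_const,
      Finset.card_univ, Fintype.card_perm, Fintype.card_fin, nsmul_eq_mul]
    ring
  have hfac : (0 : ℝ) < n ! := by positivity
  rw [hexpand, sum_numCycles]
  -- the left side is at most `n! ((H_n - log n)² + H_n)`, and `0 ≤ H_n - log n ≤ 1`
  nlinarith [sum_numCycles_sq_le n, mul_nonneg hfac.le (sub_nonneg.mpr hlow)]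

lemma card_numCycles_far_from_log_div_le {ε : ℝ} (hε : 0 < ε) {n : ℕ} (hn : 2 ≤ log n) :
    (Nat.card {σ : Perm (Fin n) // ε ≤ |(σ.numCycles : ℝ) / log n - 1|} : ℝ) / n ! ≤
      2 / (ε ^ 2 * log n) := by
  have hL : 0 < log n := by linarith
  have hfar : ∀ σ : Perm (Fin n),
      ε ≤ |(σ.numCycles : ℝ) / log n - 1| ↔ ε * log n ≤ |(σ.numCycles : ℝ) - log n| := by
    intro σ
    rw [← le_div_iff₀ hL, ← abs_of_pos hL, ← abs_div, abs_of_pos hL, sub_div, div_self hL.ne']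
  have hcheb := card_filter_le_abs_sub_mul_sq_le_sum_sq univ
    (fun σ : Perm (Fin n) => (σ.numCycles : ℝ)) (log n) (by positivity : 0 ≤ ε * log n)
  rw [Nat.card_eq_fintype_card, Fintype.card_subtype]
  simp only [hfar]
  rw [div_le_div_iff₀ (by positivity) (by positivity)]
  nlinarith [hcheb.trans (sum_sq_numCycles_sub_log_le n)]

end Equiv.Perm

lemma totalCycleCount_eq_numCycles {n : ℕ} (σ : Equiv.Perm (Fin n)) :
    totalCycleCount σ = σ.numCycles := by
  have hfixed : (univ.filter fun x => σ x = x) = σ.supportᶜ := by ext; simp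
  rw [totalCycleCount, σ.numCycles_eq, hfixed, card_compl, Fintype.card_fin]

/-- Weak law of large numbers for the total number of cycles of a uniformly random
permutation of `{1,...,n}`: `N⁽ⁿ⁾ / log n` converges in probability to `1`. -/
theorem cycleCount_wlln :
    ∀ ε : ℝ, 0 < ε →
      Tendsto (fun n : ℕ =>
          (Nat.card {σ : Equiv.Perm (Fin n) //
              ε ≤ |(totalCycleCount σ : ℝ) / Real.log n - 1|} : ℝ) / (Nat.factorial n : ℝ))
        atTop (nhds 0) := by
  intro ε hε
  have hlog : Tendsto (fun n : ℕ => log n) atTop atTop :=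
    tendsto_log_atTop.comp tendsto_natCast_atTop_atTop
  simp only [totalCycleCount_eq_numCycles]
  refine squeeze_zero' (Eventually.of_forall fun n => by positivity)
    ((hlog.eventually_ge_atTop 2).mono fun n hn =>
      Equiv.Perm.card_numCycles_far_from_log_div_le hε hn) ?_
  exact tendsto_const_nhds.div_atTop (hlog.const_mul_atTop (by positivity))
end

section
/- Moments of cycle counts equal Touchard polynomial values: for i ≥ 1 let C_m^{(n)}(σ) denote the number of cycles of length m of a permutation σ of {1,...,n}, and let E_n denote expectation with respect to the uniform probability measure on S_n. Then for all positive integers m, k, n with n ≥ mk, E_n[(C_m^{(n)})^k] = \sum_{l=0}^{k} S(k,l) (1/m)^l, where S(k,l) denotes the Stirling number of the second kind. -/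
/-- `cycleCountOfLength i σ` is the number of cycles (orbits) of `σ` of length exactly `i`. -/
noncomputable def cycleCountOfLength {n : ℕ} (i : ℕ) (σ : Equiv.Perm (Fin n)) : ℕ :=
  Nat.card {x : Fin n // Nat.card {y : Fin n // σ.SameCycle x y} = i} / i

/-- The Stirling numbers of the second kind `stirlingSecond k l`, the number of partitions
of a set of `k` labelled elements into `l` nonempty subsets. -/
def stirlingSecond : ℕ → ℕ → ℕ
  | 0, 0 => 1
  | 0, _ + 1 => 0
  | _ + 1, 0 => 0
  | k + 1, l + 1 => (l + 1) * stirlingSecond k (l + 1) + stirlingSecond k l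

/-!
Expanding `x ^ k = ∑ S(k, l) (x)_l` in falling factorials, it suffices to show that the `l`-th
factorial moment of `C_m` is `m⁻ˡ` when `l m ≤ n`. Choosing a base point on each of `l` ordered,
distinct `m`-cycles of `σ` can be done in `(C_m)_l mˡ` ways, and such a choice is the same as an
embedding `e : Fin l × Fin m ↪ Fin n` on which `σ` acts by rotating the second coordinate. For a
fixed `e` the permutations acting like this form a coset of the pointwise stabiliser of the range
of `e`, so there are `(n - l m)!` of them; as there are `n! / (n - l m)!` embeddings, the pairs
`(σ, e)` number `n!`.
-/

open Equiv Equiv.Perm Function Finset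
open scoped Nat

theorem stirlingSecond_eq_nat_stirlingSecond :
    ∀ k l, stirlingSecond k l = Nat.stirlingSecond k l
  | 0, 0 | 0, _ + 1 | _ + 1, 0 => rfl
  | k + 1, l + 1 => by
    rw [stirlingSecond, Nat.stirlingSecond_succ_succ,
      stirlingSecond_eq_nat_stirlingSecond k (l + 1), stirlingSecond_eq_nat_stirlingSecond k l]

namespace Nat

theorem mul_descFactorial_eq (x l : ℕ) :
    x * x.descFactorial l = x.descFactorial (l + 1) + l * x.descFactorial l := by
  rcases le_or_gt l x with h | h
  · rw [descFactorial_succ, ← Nat.add_mul, Nat.sub_add_cancel h]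
  · simp [descFactorial_eq_zero_iff_lt.2 h]

theorem pow_eq_sum_stirlingSecond_mul_descFactorial (x k : ℕ) :
    x ^ k = ∑ l ∈ range (k + 1), stirlingSecond k l * x.descFactorial l := by
  induction k with
  | zero => simp
  | succ k ih =>
    have shift : ∑ l ∈ range (k + 1), l * stirlingSecond k l * x.descFactorial l =
        ∑ l ∈ range (k + 1), (l + 1) * stirlingSecond k (l + 1) * x.descFactorial (l + 1) := by
      rw [sum_range_succ', sum_range_succ, stirlingSecond_eq_zero_of_lt (lt_succ_self k)]
      simp
    calc x ^ (k + 1)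
        = ∑ l ∈ range (k + 1), stirlingSecond k l * (x * x.descFactorial l) := by
          rw [pow_succ, ih, sum_mul]; exact sum_congr rfl fun l _ => by ring
      _ = ∑ l ∈ range (k + 1), stirlingSecond k l * x.descFactorial (l + 1) +
            ∑ l ∈ range (k + 1), l * stirlingSecond k l * x.descFactorial l := by
          rw [← sum_add_distrib]
          exact sum_congr rfl fun l _ => by rw [mul_descFactorial_eq]; ring
      _ = ∑ l ∈ range (k + 1), ((l + 1) * stirlingSecond k (l + 1) + stirlingSecond k l) *
            x.descFactorial (l + 1) := by
          rw [shift, ← sum_add_distrib]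
          exact sum_congr rfl fun l _ => by ring
      _ = ∑ l ∈ range (k + 2), stirlingSecond (k + 1) l * x.descFactorial l := by
          rw [sum_range_succ' _ (k + 1)]
          simp [stirlingSecond_succ_succ]

theorem descFactorial_div_mul_pow {m P : ℕ} (hP : m ∣ P) (l : ℕ) :
    (P / m).descFactorial l * m ^ l = ∏ i ∈ range l, (P - i * m) := by
  rcases Nat.eq_zero_or_pos m with rfl | hm
  · rcases l with _ | l <;> simp_all
  obtain ⟨c, rfl⟩ := hP
  rw [Nat.mul_div_cancel_left c hm, descFactorial_eq_prod_range,
    show m ^ l = ∏ _i ∈ range l, m by simp, ← prod_mul_distrib]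
  exact prod_congr rfl fun i _ => by rw [Nat.sub_mul, mul_comm c]

end Nat

theorem Function.Semiconj.minimalPeriod_eq {α β : Type*} {f : α → α} {g : β → β}
    {e : β → α} (h : Semiconj e g f) (he : Injective e) (b : β) :
    minimalPeriod f (e b) = minimalPeriod g b :=
  minimalPeriod_eq_minimalPeriod_iff.2 fun n => by
    simp only [IsPeriodicPt, IsFixedPt, ← (h.iterate_right n) b, he.eq_iff]

theorem Fin.val_iterate_finRotate {m : ℕ} (a : Fin m) (k : ℕ) :
    ((finRotate m)^[k] a : ℕ) = (a + k) % m := by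
  induction k with
  | zero => simp [Nat.mod_eq_of_lt a.isLt]
  | succ k ih =>
    have := a.neZero
    rw [iterate_succ_apply', finRotate_apply, Fin.val_add, ih, Fin.val_one', ← Nat.add_mod,
      ← add_assoc]

theorem minimalPeriod_finRotate {m : ℕ} (a : Fin m) : minimalPeriod (finRotate m) a = m := by
  have hperiodic (n : ℕ) : IsPeriodicPt (finRotate m) n a ↔ m ∣ n := by
    have := Nat.add_modEq_left_iff (a := a) (b := n) (n := m)
    rwa [Nat.ModEq, Nat.mod_eq_of_lt a.isLt, ← Fin.val_iterate_finRotate, ← Fin.ext_iff] at this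
  exact Nat.dvd_antisymm (isPeriodicPt_iff_minimalPeriod_dvd.1 ((hperiodic m).2 dvd_rfl))
    ((hperiodic _).1 (isPeriodicPt_minimalPeriod _ _))

def rotateRows (l m : ℕ) : Perm (Fin l × Fin m) := prodCongr (Equiv.refl _) (finRotate m)

theorem iterate_rotateRows {l m : ℕ} (k : ℕ) (p : Fin l × Fin m) :
    (rotateRows l m)^[k] p = (p.1, (finRotate m)^[k] p.2) := by
  rw [rotateRows, prodCongr_apply, Prod.map_iterate, coe_refl, iterate_id]
  rfl

theorem minimalPeriod_rotateRows {l m : ℕ} (p : Fin l × Fin m) :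
    minimalPeriod (rotateRows l m) p = m := by
  simp [rotateRows, prodCongr_apply, minimalPeriod_prodMap, minimalPeriod_finRotate]

theorem Fintype.sum_card_subtype_comm {ι κ : Type*} [Fintype ι] [Fintype κ]
    (r : ι → κ → Prop) :
    ∑ i, Nat.card {j // r i j} = ∑ j, Nat.card {i // r i j} := by
  classical
  simp only [Nat.card_eq_fintype_card, Fintype.card_subtype, card_filter]
  exact sum_comm

namespace Equiv.Perm

variable {α : Type*} (σ : Perm α) {m l : ℕ}

def OnDistinctCyclesOfLength (m : ℕ) {l : ℕ} (x : Fin l → α) : Prop :=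
  (∀ i, minimalPeriod σ (x i) = m) ∧ Pairwise fun i j => ¬σ.SameCycle (x i) (x j)

variable {σ} {x : Fin l → α}

theorem sameCycle_iterate_right (x : α) (n : ℕ) : σ.SameCycle x (σ^[n] x) := by
  rw [iterate_eq_pow]
  exact sameCycle_pow_right.2 (SameCycle.refl σ x)

theorem onDistinctCyclesOfLength_succ_iff {f : Fin (l + 1) → α} :
    σ.OnDistinctCyclesOfLength m f ↔ σ.OnDistinctCyclesOfLength m (Fin.tail f) ∧
      minimalPeriod σ (f 0) = m ∧ ∀ i, ¬σ.SameCycle (Fin.tail f i) (f 0) := by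
  simp only [OnDistinctCyclesOfLength, Fin.forall_fin_succ, pairwise_fin_succ_iff, Fin.tail,
    sameCycle_comm (x := f 0)]
  tauto

theorem OnDistinctCyclesOfLength.iterate_injective (hx : σ.OnDistinctCyclesOfLength m x) :
    Injective fun p : Fin l × Fin m => σ^[p.2] (x p.1) := by
  rintro ⟨i, j⟩ ⟨i', j'⟩ (h : σ^[j] (x i) = σ^[j'] (x i'))
  obtain rfl : i = i' := by
    by_contra hne
    exact hx.2 hne <|
      (sameCycle_iterate_right _ j).trans (h ▸ (sameCycle_iterate_right _ j').symm)
  have hlt (j : Fin m) : (j : ℕ) ∈ Set.Iio (minimalPeriod σ (x i)) := by simp [hx.1 i]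
  exact Prod.ext rfl (Fin.ext (iterate_injOn_Iio_minimalPeriod (hlt j) (hlt j') h))

def OnDistinctCyclesOfLength.cycleEmbedding (hx : σ.OnDistinctCyclesOfLength m x) :
    Fin l × Fin m ↪ α :=
  ⟨fun p => σ^[p.2] (x p.1), hx.iterate_injective⟩

theorem OnDistinctCyclesOfLength.semiconj_cycleEmbedding (hx : σ.OnDistinctCyclesOfLength m x) :
    Semiconj hx.cycleEmbedding (rotateRows l m) σ := by
  rintro ⟨i, j⟩
  have hj := Fin.val_iterate_finRotate j 1
  rw [iterate_one] at hj
  change σ^[(finRotate m j : ℕ)] (x i) = σ (σ^[j] (x i))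
  have hmod := iterate_mod_minimalPeriod_eq (f := σ) (x := x i) (n := j + 1)
  rw [hx.1 i] at hmod
  rw [hj, hmod, iterate_succ_apply']

variable [Fintype α]

variable (σ) in
theorem card_sameCycle_eq_minimalPeriod (x : α) :
    Nat.card {y // σ.SameCycle x y} = minimalPeriod σ x := by
  have horbit : {y | σ.SameCycle x y} = MulAction.orbit (Subgroup.zpowers σ) x := by
    ext y
    simp only [SameCycle, Set.mem_ofPred_eq, MulAction.mem_orbit_iff, Subgroup.exists_zpowers]
    rfl
  change Nat.card ({y | σ.SameCycle x y} : Set α) = _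
  classical
  rw [horbit, Nat.card_eq_fintype_card, ← MulAction.minimalPeriod_eq_card]
  rfl

variable (σ) in
theorem card_filter_sameCycle [DecidableEq α] (x : α) :
    #{y | σ.SameCycle x y} = minimalPeriod σ x := by
  rw [← Fintype.card_subtype, ← Nat.card_eq_fintype_card, card_sameCycle_eq_minimalPeriod]

theorem SameCycle.minimalPeriod_eq {x y : α} (h : σ.SameCycle x y) :
    minimalPeriod σ x = minimalPeriod σ y := by
  rw [← card_sameCycle_eq_minimalPeriod, ← card_sameCycle_eq_minimalPeriod]
  exact Nat.card_congr (subtypeEquivRight fun z => ⟨h.symm.trans, h.trans⟩)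

variable (σ) in
noncomputable def ptsOnCyclesOfLength (m : ℕ) : Finset α := {x | minimalPeriod σ x = m}

variable (σ) in
theorem dvd_card_ptsOnCyclesOfLength [DecidableEq α] (m : ℕ) :
    m ∣ #(σ.ptsOnCyclesOfLength m) := by
  let orbitOf : α → Finset α := fun x => {y | σ.SameCycle x y}
  rw [card_eq_sum_card_image orbitOf]
  refine dvd_sum fun s hs => ?_
  obtain ⟨x, hx, rfl⟩ := mem_image.1 hs
  have hfiber : {y ∈ σ.ptsOnCyclesOfLength m | orbitOf y = orbitOf x} = orbitOf x := by
    ext y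
    simp only [ptsOnCyclesOfLength, orbitOf, mem_filter, mem_univ, true_and] at hx ⊢
    constructor
    · rintro ⟨-, hyx⟩
      have hy : y ∈ orbitOf y := by simp [orbitOf, SameCycle.refl]
      simpa [orbitOf, hyx] using hy
    · intro hxy
      refine ⟨hxy.minimalPeriod_eq ▸ hx, ?_⟩
      ext z
      simpa using ⟨hxy.trans, hxy.symm.trans⟩
  rw [hfiber, card_filter_sameCycle, (mem_filter.1 hx).2]

theorem OnDistinctCyclesOfLength.mem_range_cycleEmbedding [NeZero m]
    (hx : σ.OnDistinctCyclesOfLength m x) {a : α} :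
    a ∈ Set.range hx.cycleEmbedding ↔ ∃ i, σ.SameCycle (x i) a := by
  constructor
  · rintro ⟨⟨i, j⟩, rfl⟩
    exact ⟨i, sameCycle_iterate_right _ j⟩
  · rintro ⟨i, hi⟩
    obtain ⟨k, rfl⟩ := hi.exists_nat_pow_eq
    refine ⟨(i, ⟨k % m, Nat.mod_lt _ (NeZero.pos m)⟩), ?_⟩
    change σ^[k % m] (x i) = (σ ^ k) (x i)
    rw [← iterate_eq_pow, ← hx.1 i, iterate_mod_minimalPeriod_eq]

theorem OnDistinctCyclesOfLength.range_cycleEmbedding_subset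
    (hx : σ.OnDistinctCyclesOfLength m x) :
    Set.range hx.cycleEmbedding ⊆ σ.ptsOnCyclesOfLength m := by
  rintro _ ⟨⟨i, j⟩, rfl⟩
  simpa [ptsOnCyclesOfLength, cycleEmbedding,
    ← (sameCycle_iterate_right (x i) j).minimalPeriod_eq] using hx.1 i

theorem OnDistinctCyclesOfLength.card_extensions [DecidableEq α] [NeZero m]
    (hx : σ.OnDistinctCyclesOfLength m x) :
    Nat.card {a // minimalPeriod σ a = m ∧ ∀ i, ¬σ.SameCycle (x i) a} =
      #(σ.ptsOnCyclesOfLength m) - l * m := by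
  have hset : ({a | minimalPeriod σ a = m ∧ ∀ i, ¬σ.SameCycle (x i) a} : Finset α) =
      σ.ptsOnCyclesOfLength m \ (Set.range hx.cycleEmbedding).toFinset := by
    ext a
    simp only [ptsOnCyclesOfLength, mem_sdiff, mem_filter, mem_univ, true_and, Set.mem_toFinset,
      hx.mem_range_cycleEmbedding, not_exists]
  rw [Nat.card_eq_fintype_card, Fintype.card_subtype, hset,
    card_sdiff_of_subset (Set.toFinset_subset.2 hx.range_cycleEmbedding_subset),
    Set.toFinset_card, Fintype.card_range, Fintype.card_prod, Fintype.card_fin, Fintype.card_fin]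

variable (σ m l) in
def onDistinctCyclesOfLengthSuccEquiv :
    {x : Fin (l + 1) → α // σ.OnDistinctCyclesOfLength m x} ≃
      Σ x : {x : Fin l → α // σ.OnDistinctCyclesOfLength m x},
        {a // minimalPeriod σ a = m ∧ ∀ i, ¬σ.SameCycle (x.1 i) a} where
  toFun f := ⟨⟨Fin.tail f.1, (onDistinctCyclesOfLength_succ_iff.1 f.2).1⟩,
    ⟨f.1 0, (onDistinctCyclesOfLength_succ_iff.1 f.2).2⟩⟩
  invFun p := ⟨Fin.cons p.2.1 p.1.1,
    onDistinctCyclesOfLength_succ_iff.2 (by simpa using ⟨p.1.2, p.2.2⟩)⟩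
  left_inv f := Subtype.ext (Fin.cons_self_tail f.1)
  right_inv p := Sigma.subtype_ext (Subtype.ext (funext fun _ => rfl)) rfl

variable (σ m l) in
theorem card_onDistinctCyclesOfLength [DecidableEq α] [NeZero m] :
    Nat.card {x : Fin l → α // σ.OnDistinctCyclesOfLength m x} =
      ∏ i ∈ range l, (#(σ.ptsOnCyclesOfLength m) - i * m) := by
  induction l with
  | zero => simp [OnDistinctCyclesOfLength]
  | succ l ih =>
    classical
    rw [Nat.card_congr (onDistinctCyclesOfLengthSuccEquiv σ m l), Nat.card_sigma,
      sum_congr rfl fun x _ => x.2.card_extensions, sum_const, card_univ,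
      ← Nat.card_eq_fintype_card, ih, prod_range_succ, smul_eq_mul]

theorem card_perm_fixing_range [DecidableEq α] {β : Type*} [Fintype β] (e : β ↪ α) :
    Nat.card {τ : Perm α // ∀ b, τ (e b) = e b} = (Fintype.card α - Fintype.card β)! := by
  have hfix : {τ : Perm α // ∀ b, τ (e b) = e b} ≃ Perm {a // a ∉ Set.range e} :=
    (subtypeEquivRight fun τ => by simp [eq_comm]).trans (Perm.subtypeEquivSubtypePerm _).symm
  rw [Nat.card_congr hfix, Nat.card_eq_fintype_card, Fintype.card_perm, Fintype.card_subtype_compl,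
    Fintype.card_range]

theorem card_semiconj [DecidableEq α] {β : Type*} [Fintype β] (e : β ↪ α) (r : Perm β) :
    Nat.card {σ : Perm α // Semiconj e r σ} = (Fintype.card α - Fintype.card β)! := by
  rw [← card_perm_fixing_range e]
  -- `σ = τ * ρ` with `τ` fixing the range of `e` and `ρ` extending `r` by the identity
  refine Nat.card_congr (subtypeEquiv (Equiv.mulRight (r.viaEmbedding e)) fun τ => ?_).symm
  simp only [Semiconj, coe_mulRight, Perm.mul_apply, viaEmbedding_apply]
  exact ⟨fun h b => (h (r b)).symm, fun h b => by simpa using (h (r.symm b)).symm⟩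

theorem onDistinctCyclesOfLength_of_semiconj [NeZero m] {e : Fin l × Fin m ↪ α}
    (he : Semiconj e (rotateRows l m) σ) : σ.OnDistinctCyclesOfLength m fun i => e (i, 0) := by
  refine ⟨fun i => (he.minimalPeriod_eq e.injective _).trans (minimalPeriod_rotateRows _),
    fun i j hij hsc => hij ?_⟩
  obtain ⟨k, hk⟩ := hsc.exists_nat_pow_eq
  rw [← iterate_eq_pow, ← he.iterate_right, iterate_rotateRows] at hk
  exact congrArg Prod.fst (e.injective hk)

variable (σ m l) in
def onDistinctCyclesOfLengthEquiv [NeZero m] :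
    {x : Fin l → α // σ.OnDistinctCyclesOfLength m x} ≃
      {e : Fin l × Fin m ↪ α // Semiconj e (rotateRows l m) σ} where
  toFun x := ⟨x.2.cycleEmbedding, x.2.semiconj_cycleEmbedding⟩
  invFun e := ⟨fun i => e.1 (i, 0), onDistinctCyclesOfLength_of_semiconj e.2⟩
  left_inv x := Subtype.ext (funext fun i => rfl)
  right_inv e := Subtype.ext <| DFunLike.ext _ _ fun ⟨i, j⟩ => by
    change σ^[j] (e.1 (i, 0)) = e.1 (i, j)
    rw [← e.2.iterate_right, iterate_rotateRows]
    congr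
    ext
    simp [Fin.val_iterate_finRotate, Nat.mod_eq_of_lt j.isLt]

theorem sum_card_onDistinctCyclesOfLength [DecidableEq α] [NeZero m]
    (hlm : l * m ≤ Fintype.card α) :
    ∑ σ : Perm α, Nat.card {x : Fin l → α // σ.OnDistinctCyclesOfLength m x} =
      (Fintype.card α)! := by
  calc ∑ σ : Perm α, Nat.card {x : Fin l → α // σ.OnDistinctCyclesOfLength m x}
      = ∑ σ : Perm α, Nat.card {e : Fin l × Fin m ↪ α // Semiconj e (rotateRows l m) σ} :=
        sum_congr rfl fun σ _ => Nat.card_congr (onDistinctCyclesOfLengthEquiv σ m l)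
    _ = ∑ e : Fin l × Fin m ↪ α, Nat.card {σ : Perm α // Semiconj e (rotateRows l m) σ} :=
        Fintype.sum_card_subtype_comm _
    _ = (Fintype.card α)! := by
        simp only [card_semiconj, sum_const, card_univ, Fintype.card_embedding_eq,
          Fintype.card_prod, Fintype.card_fin, smul_eq_mul]
        exact (mul_comm _ _).trans (Nat.factorial_mul_descFactorial hlm)

end Equiv.Perm

theorem cycleCountOfLength_eq_card_div {n : ℕ} (m : ℕ) (σ : Perm (Fin n)) :
    cycleCountOfLength m σ = #(σ.ptsOnCyclesOfLength m) / m := by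
  simp only [cycleCountOfLength, Nat.card_eq_fintype_card, Fintype.card_subtype,
    card_filter_sameCycle]
  rfl

theorem sum_descFactorial_cycleCountOfLength_mul_pow {n m l : ℕ} (hm : 0 < m)
    (hlm : l * m ≤ n) :
    (∑ σ : Perm (Fin n), (cycleCountOfLength m σ).descFactorial l) * m ^ l = n ! := by
  have : NeZero m := ⟨hm.ne'⟩
  rw [sum_mul]
  calc ∑ σ : Perm (Fin n), (cycleCountOfLength m σ).descFactorial l * m ^ l
      = ∑ σ : Perm (Fin n), Nat.card {x : Fin l → Fin n // σ.OnDistinctCyclesOfLength m x} :=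
        sum_congr rfl fun σ _ => by
          rw [cycleCountOfLength_eq_card_div, Nat.descFactorial_div_mul_pow
            (σ.dvd_card_ptsOnCyclesOfLength m), card_onDistinctCyclesOfLength]
    _ = n ! := by simpa using sum_card_onDistinctCyclesOfLength (α := Fin n) (by simpa using hlm)

theorem cycleCount_moment_eq_touchard_general (m k n : ℕ) (hm : 1 ≤ m)
    (hn : m * k ≤ n) :
    (1 / (Nat.factorial n : ℝ)) *
        ∑ σ : Equiv.Perm (Fin n), (cycleCountOfLength m σ : ℝ) ^ k =
      ∑ l ∈ Finset.range (k + 1), (stirlingSecond k l : ℝ) * (1 / (m : ℝ)) ^ l := by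
  have hfactorialMoment : ∀ l ∈ range (k + 1),
      ∑ σ : Perm (Fin n), ((cycleCountOfLength m σ).descFactorial l : ℝ) = n ! / m ^ l := by
    intro l hl
    have hlm : l * m ≤ n := by nlinarith [mem_range.1 hl]
    rw [eq_div_iff (by positivity)]
    exact_mod_cast sum_descFactorial_cycleCountOfLength_mul_pow hm hlm
  calc (1 / (n ! : ℝ)) * ∑ σ : Perm (Fin n), (cycleCountOfLength m σ : ℝ) ^ k
      = (1 / (n ! : ℝ)) * ∑ σ : Perm (Fin n), ∑ l ∈ range (k + 1),
          (stirlingSecond k l : ℝ) * (cycleCountOfLength m σ).descFactorial l := by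
        congr 1
        refine sum_congr rfl fun σ _ => ?_
        simp only [stirlingSecond_eq_nat_stirlingSecond]
        exact_mod_cast Nat.pow_eq_sum_stirlingSecond_mul_descFactorial _ _
    _ = ∑ l ∈ range (k + 1), (stirlingSecond k l : ℝ) * ((1 / (n ! : ℝ)) *
          ∑ σ : Perm (Fin n), ((cycleCountOfLength m σ).descFactorial l : ℝ)) := by
        rw [sum_comm, mul_sum]
        simp_rw [mul_sum, mul_left_comm]
    _ = ∑ l ∈ range (k + 1), (stirlingSecond k l : ℝ) * (1 / (m : ℝ)) ^ l :=
        sum_congr rfl fun l hl => by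
          rw [hfactorialMoment l hl, one_div_pow]
          field_simp

/-- For a uniformly random permutation of `{1,...,n}` with `n ≥ mk`, the `k`-th moment of
the number of cycles of length `m` equals `∑_{l=0}^{k} S(k,l) (1/m)^l`, the Touchard
polynomial evaluated at `1/m`. -/
theorem cycleCount_moment_eq_touchard (m k n : ℕ) (hm : 1 ≤ m) (hk : 1 ≤ k)
    (hn : m * k ≤ n) :
    (1 / (Nat.factorial n : ℝ)) *
        ∑ σ : Equiv.Perm (Fin n), (cycleCountOfLength m σ : ℝ) ^ k =
      ∑ l ∈ Finset.range (k + 1), (stirlingSecond k l : ℝ) * (1 / (m : ℝ)) ^ l :=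
  cycleCount_moment_eq_touchard_general m k n hm hn
end

section
/- Threshold for isolated vertices in the Erdős–Rényi graph: let D_n denote the number of isolated (disconnected) vertices of G(n, p_n), and suppose p_n = (log n + c_n)/n with 0 < p_n < 1. (i) If lim_{n→∞} c_n = +∞, then lim_{n→∞} P_n(D_n = 0) = 1. (ii) If lim_{n→∞} c_n = −∞, then for every positive integer M, lim_{n→∞} P_n(D_n > M) = 1. -/
open MeasureTheory Filter

/-- The index set of potential edges: unordered pairs of distinct vertices of `{1,...,n}`. -/
abbrev EdgeIdx (n : ℕ) := {e : Sym2 (Fin n) // ¬ e.IsDiag}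

/-- The Bernoulli(`p`) measure on `Bool`: mass `p` at `true` and `1-p` at `false`. -/
noncomputable def bernoulliBool (p : ℝ) : Measure Bool :=
  ENNReal.ofReal p • Measure.dirac true + ENNReal.ofReal (1 - p) • Measure.dirac false

/-- The Erdős–Rényi measure `G(n,p)`: the product, over all unordered pairs of distinct
vertices, of Bernoulli(`p`) measures on `{0,1}` (here `Bool`). -/
noncomputable def erMeasure (n : ℕ) (p : ℝ) : Measure (EdgeIdx n → Bool) :=
  Measure.pi fun _ => bernoulliBool p

/-- The simple graph on `{1,...,n}` determined by the edge-indicator configuration `ω`: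
a pair `{i,j}` of distinct vertices is an edge exactly when its coordinate is `true`. -/
def erGraph (n : ℕ) (ω : EdgeIdx n → Bool) : SimpleGraph (Fin n) where
  Adj i j := ∃ h : ¬ (s(i, j) : Sym2 (Fin n)).IsDiag, ω ⟨s(i, j), h⟩ = true
  symm := by
    constructor
    intro i j hadj
    obtain ⟨h, hw⟩ := hadj
    have hswap : (s(i, j) : Sym2 (Fin n)) = s(j, i) := Sym2.eq_swap
    refine ⟨hswap ▸ h, ?_⟩
    have he : (⟨s(j, i), hswap ▸ h⟩ : EdgeIdx n) = ⟨s(i, j), h⟩ := Subtype.ext hswap.symm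
    rw [he]
    exact hw
  loopless := by
    constructor
    intro i hadj
    obtain ⟨h, _⟩ := hadj
    exact h (Sym2.mk_isDiag_iff.mpr rfl)

/-- The number of isolated (disconnected) vertices of the graph determined by `ω`. -/
noncomputable def isolatedCount (n : ℕ) (ω : EdgeIdx n → Bool) : ℕ :=
  Nat.card {v : Fin n // ∀ w : Fin n, ¬ (erGraph n ω).Adj v w}

/-! The expected number of isolated vertices is `Eₙ = n (1 - pₙ)^(n-1) ≤ exp (1 - cₙ)`, and the
union bound gives `P(Dₙ ≠ 0) ≤ Eₙ`, whence (i). Two distinct vertices share exactly one potential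
edge, so both are isolated with probability `(1 - p)^(2n-3)`; this gives
`Var Dₙ ≤ Eₙ + Eₙ² pₙ / (1 - pₙ)`. When `cₙ → -∞` we have `pₙ ≤ log n / n`, hence `pₙ → 0`, and
`log Eₙ ≥ -cₙ - pₙ log n / (1 - pₙ) → ∞`; once `Eₙ ≥ 2M`, Chebyshev's inequality bounds
`P(Dₙ ≤ M)` by `4 / Eₙ + 4 pₙ / (1 - pₙ) → 0`, whence (ii). -/

open Finset ProbabilityTheory Topology

section Bernoulli

variable {p : ℝ}

lemma isProbabilityMeasure_bernoulliBool (h0 : 0 ≤ p) (h1 : p ≤ 1) :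
    IsProbabilityMeasure (bernoulliBool p) :=
  ⟨by simp [bernoulliBool, ← ENNReal.ofReal_add h0 (sub_nonneg.2 h1)]⟩

lemma bernoulliBool_singleton_false : bernoulliBool p {false} = ENNReal.ofReal (1 - p) := by
  simp [bernoulliBool]

lemma measureReal_pi_bernoulliBool_forall_eq_false {ι : Type*} [Fintype ι] (h0 : 0 ≤ p)
    (h1 : p ≤ 1) (s : Finset ι) :
    (Measure.pi fun _ : ι => bernoulliBool p).real {ω | ∀ i ∈ s, ω i = false} = (1 - p) ^ #s := by
  classical
  have := isProbabilityMeasure_bernoulliBool h0 h1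
  have hset : {ω : ι → Bool | ∀ i ∈ s, ω i = false} =
      Set.univ.pi fun i => if i ∈ (s : Set ι) then {false} else Set.univ := by
    rw [Set.pi_univ_ite]; rfl
  rw [hset, measureReal_def, Measure.pi_pi]
  simp only [apply_ite, measure_univ, bernoulliBool_singleton_false, Finset.mem_coe]
  rw [Finset.prod_ite_mem, Finset.univ_inter, Finset.prod_const, ENNReal.toReal_pow,
    ENNReal.toReal_ofReal (sub_nonneg.2 h1)]

end Bernoulli

section MomentMethod

variable {Ω ι : Type*} [MeasurableSpace Ω] {μ : Measure Ω} [IsFiniteMeasure μ] [Fintype ι]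
  {A : ι → Set Ω}

lemma integral_sum_indicator_one (hA : ∀ i, MeasurableSet (A i)) :
    ∫ ω, ∑ i, (A i).indicator (1 : Ω → ℝ) ω ∂μ = ∑ i, μ.real (A i) := by
  rw [integral_finsetSum _ fun i _ => (integrable_const 1).indicator (hA i)]
  simp only [integral_indicator_one (hA _)]

lemma integral_sq_sum_indicator_one (hA : ∀ i, MeasurableSet (A i)) :
    ∫ ω, (∑ i, (A i).indicator (1 : Ω → ℝ) ω) ^ 2 ∂μ = ∑ i, ∑ j, μ.real (A i ∩ A j) := by
  have hsq : ∀ ω, (∑ i, (A i).indicator (1 : Ω → ℝ) ω) ^ 2 =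
      ∑ i, ∑ j, (A i ∩ A j).indicator 1 ω := fun ω => by
    simp only [sq, Finset.sum_mul_sum, Set.inter_indicator_one, Pi.mul_apply]
  simp only [hsq]
  rw [integral_finsetSum _ fun i _ => integrable_finsetSum _ fun j _ =>
    (integrable_const 1).indicator ((hA i).inter (hA j))]
  simp only [integral_sum_indicator_one fun j => (hA _).inter (hA j)]

lemma measureReal_le_le_variance_div_sq {X : Ω → ℝ} (hX : MemLp X 2 μ) {M : ℝ}
    (hM : M < μ[X]) :
    μ.real {ω | X ω ≤ M} ≤ variance X μ / (μ[X] - M) ^ 2 := by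
  have hsub : {ω | X ω ≤ M} ⊆ {ω | μ[X] - M ≤ |X ω - μ[X]|} := fun ω hω => by
    rw [Set.mem_ofPred_eq, abs_sub_comm]
    exact (sub_le_sub_left hω _).trans (le_abs_self _)
  calc μ.real {ω | X ω ≤ M} ≤ μ.real {ω | μ[X] - M ≤ |X ω - μ[X]|} := measureReal_mono hsub
    _ ≤ variance X μ / (μ[X] - M) ^ 2 := by
      rw [measureReal_def]
      refine ENNReal.toReal_le_of_le_ofReal (div_nonneg (variance_nonneg X μ) (sq_nonneg _)) ?_
      exact meas_ge_le_variance_div_sq hX (sub_pos.2 hM)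

end MomentMethod

section IsolatedVertices

variable {n : ℕ}

def incidentEdges (n : ℕ) (v : Fin n) : Finset (EdgeIdx n) := {e | v ∈ e.val}

def isolatedSet (n : ℕ) (v : Fin n) : Set (EdgeIdx n → Bool) :=
  {ω | ∀ w : Fin n, ¬ (erGraph n ω).Adj v w}

lemma mk_mem_incidentEdges {v w : Fin n} (h : ¬ (s(v, w) : Sym2 (Fin n)).IsDiag) :
    (⟨s(v, w), h⟩ : EdgeIdx n) ∈ incidentEdges n v := by
  simp [incidentEdges]

lemma exists_eq_mk_of_mem_incidentEdges {v : Fin n} {e : EdgeIdx n}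
    (he : e ∈ incidentEdges n v) : ∃ w, e.val = s(v, w) :=
  Sym2.mem_iff_exists.mp (by simpa [incidentEdges] using he)

lemma isolatedSet_eq (v : Fin n) :
    isolatedSet n v = {ω | ∀ e ∈ incidentEdges n v, ω e = false} := by
  ext ω
  simp only [isolatedSet, Set.mem_ofPred_eq, erGraph, not_exists, Bool.not_eq_true]
  constructor
  · rintro h ⟨e, hdiag⟩ he
    obtain ⟨w, rfl⟩ := exists_eq_mk_of_mem_incidentEdges he
    exact h w hdiag
  · exact fun h w hdiag => h _ (mk_mem_incidentEdges hdiag)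

lemma card_incidentEdges (v : Fin n) : #(incidentEdges n v) = n - 1 := by
  have hbij : #(univ.erase v) = #(incidentEdges n v) := by
    refine Finset.card_bij (fun w hw => ⟨s(v, w), by simpa using (Finset.ne_of_mem_erase hw).symm⟩)
      (fun w _ => mk_mem_incidentEdges _) (fun a _ b _ hab => Sym2.congr_right.mp
        (congrArg Subtype.val hab)) fun e he => ?_
    obtain ⟨w, hw⟩ := exists_eq_mk_of_mem_incidentEdges he
    refine ⟨w, Finset.mem_erase.2 ⟨fun hwv => e.prop ?_, Finset.mem_univ w⟩, Subtype.ext hw.symm⟩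
    simp [hw, hwv]
  rw [← hbij, Finset.card_erase_of_mem (Finset.mem_univ v), Finset.card_univ, Fintype.card_fin]

lemma incidentEdges_inter {v w : Fin n} (hvw : v ≠ w) :
    incidentEdges n v ∩ incidentEdges n w = {⟨s(v, w), by simpa using hvw⟩} := by
  ext e
  simp only [Finset.mem_inter, incidentEdges, Finset.mem_filter, Finset.mem_univ, true_and,
    Finset.mem_singleton, ← Sym2.mem_and_mem_iff hvw, Subtype.ext_iff]

lemma card_incidentEdges_union {v w : Fin n} (hvw : v ≠ w) :
    #(incidentEdges n v ∪ incidentEdges n w) = 2 * n - 3 := by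
  have hunion := Finset.card_union_add_card_inter (incidentEdges n v) (incidentEdges n w)
  rw [incidentEdges_inter hvw, card_incidentEdges, card_incidentEdges, Finset.card_singleton]
    at hunion
  have := Fin.val_ne_of_ne hvw
  omega

lemma setOf_isolatedCount_ne_zero :
    {ω | isolatedCount n ω ≠ 0} = ⋃ v : Fin n, isolatedSet n v := by
  ext ω
  simp [isolatedCount, isolatedSet, Nat.card_ne_zero, Subtype.finite]

lemma isolatedCount_eq_sum_indicator (ω : EdgeIdx n → Bool) :
    (isolatedCount n ω : ℝ) = ∑ v, (isolatedSet n v).indicator 1 ω := by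
  classical
  simp only [isolatedCount, Nat.card_eq_fintype_card, Fintype.card_subtype, Finset.card_filter,
    Set.indicator_apply, isolatedSet, Set.mem_ofPred_eq, Pi.one_apply]
  push_cast
  rfl

end IsolatedVertices

section ErdosRenyi

variable {n : ℕ} {p : ℝ}

lemma isProbabilityMeasure_erMeasure (h0 : 0 ≤ p) (h1 : p ≤ 1) :
    IsProbabilityMeasure (erMeasure n p) :=
  have := isProbabilityMeasure_bernoulliBool h0 h1
  Measure.pi.instIsProbabilityMeasure _

lemma erMeasure_real_isolatedSet (h0 : 0 ≤ p) (h1 : p ≤ 1) (v : Fin n) :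
    (erMeasure n p).real (isolatedSet n v) = (1 - p) ^ (n - 1) := by
  rw [isolatedSet_eq, erMeasure, measureReal_pi_bernoulliBool_forall_eq_false h0 h1,
    card_incidentEdges]

lemma erMeasure_real_isolatedSet_inter (h0 : 0 ≤ p) (h1 : p ≤ 1) {v w : Fin n} (hvw : v ≠ w) :
    (erMeasure n p).real (isolatedSet n v ∩ isolatedSet n w) = (1 - p) ^ (2 * n - 3) := by
  have hset : isolatedSet n v ∩ isolatedSet n w =
      {ω | ∀ e ∈ incidentEdges n v ∪ incidentEdges n w, ω e = false} := by
    ext ω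
    simp only [isolatedSet_eq, Set.mem_inter_iff, Set.mem_ofPred_eq, Finset.mem_union,
      or_imp, forall_and]
  rw [hset, erMeasure, measureReal_pi_bernoulliBool_forall_eq_false h0 h1,
    card_incidentEdges_union hvw]

lemma integral_isolatedCount (h0 : 0 ≤ p) (h1 : p ≤ 1) :
    ∫ ω, (isolatedCount n ω : ℝ) ∂erMeasure n p = n * (1 - p) ^ (n - 1) := by
  have := isProbabilityMeasure_erMeasure (n := n) h0 h1
  simp only [isolatedCount_eq_sum_indicator,
    integral_sum_indicator_one fun _ => MeasurableSet.of_discrete,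
    erMeasure_real_isolatedSet h0 h1, Finset.sum_const, Finset.card_univ, Fintype.card_fin,
    nsmul_eq_mul]

lemma integral_isolatedCount_sq (h0 : 0 ≤ p) (h1 : p ≤ 1) :
    ∫ ω, (isolatedCount n ω : ℝ) ^ 2 ∂erMeasure n p =
      n * (1 - p) ^ (n - 1) + n * (n - 1) * (1 - p) ^ (2 * n - 3) := by
  have := isProbabilityMeasure_erMeasure (n := n) h0 h1
  have hrow : ∀ v : Fin n, ∑ w, (erMeasure n p).real (isolatedSet n v ∩ isolatedSet n w) =
      (1 - p) ^ (n - 1) + (n - 1) * (1 - p) ^ (2 * n - 3) := fun v => by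
    rw [← Finset.add_sum_erase _ _ (Finset.mem_univ v), Set.inter_self,
      erMeasure_real_isolatedSet h0 h1, Finset.sum_congr rfl fun w hw =>
        erMeasure_real_isolatedSet_inter h0 h1 (Finset.ne_of_mem_erase hw).symm,
      Finset.sum_const, Finset.card_erase_of_mem (Finset.mem_univ v), Finset.card_univ,
      Fintype.card_fin, nsmul_eq_mul, Nat.cast_pred v.pos]
  simp only [isolatedCount_eq_sum_indicator,
    integral_sq_sum_indicator_one fun _ => MeasurableSet.of_discrete, hrow, Finset.sum_const,
    Finset.card_univ, Fintype.card_fin, nsmul_eq_mul]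
  ring

lemma variance_isolatedCount_le (hn : 2 ≤ n) (h0 : 0 ≤ p) (h1 : p < 1) :
    variance (fun ω => (isolatedCount n ω : ℝ)) (erMeasure n p) ≤
      n * (1 - p) ^ (n - 1) + (n * (1 - p) ^ (n - 1)) ^ 2 * (p / (1 - p)) := by
  have := isProbabilityMeasure_erMeasure (n := n) h0 h1.le
  rw [variance_eq_sub MemLp.of_discrete]
  simp only [Pi.pow_apply, integral_isolatedCount_sq h0 h1.le, integral_isolatedCount h0 h1.le]
  have hq : 0 < 1 - p := sub_pos.2 h1
  have hpow : ((1 - p) ^ (n - 1)) ^ 2 = (1 - p) ^ (2 * n - 3) * (1 - p) := by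
    rw [← pow_mul, ← pow_succ]
    congr 1
    omega
  have hcancel : (n : ℝ) ^ 2 * ((1 - p) ^ (2 * n - 3) * (1 - p)) * (p / (1 - p)) =
      n ^ 2 * (1 - p) ^ (2 * n - 3) * p := by
    field_simp
  rw [mul_pow, hpow, hcancel]
  have : 0 ≤ (1 - p) ^ (2 * n - 3) := by positivity
  nlinarith

lemma erMeasure_real_isolatedCount_ne_zero_le (h0 : 0 ≤ p) (h1 : p ≤ 1) :
    (erMeasure n p).real {ω | isolatedCount n ω ≠ 0} ≤ n * (1 - p) ^ (n - 1) := by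
  have := isProbabilityMeasure_erMeasure (n := n) h0 h1
  rw [setOf_isolatedCount_ne_zero]
  calc _ ≤ ∑ v, (erMeasure n p).real (isolatedSet n v) := measureReal_iUnion_fintype_le _
    _ = n * (1 - p) ^ (n - 1) := by simp [erMeasure_real_isolatedSet h0 h1]

lemma erMeasure_real_isolatedCount_le_le (hn : 2 ≤ n) (h0 : 0 ≤ p) (h1 : p < 1) {M : ℕ}
    (hM : 2 * M ≤ n * (1 - p) ^ (n - 1)) :
    (erMeasure n p).real {ω | isolatedCount n ω ≤ M} ≤
      4 / (n * (1 - p) ^ (n - 1)) + 4 * (p / (1 - p)) := by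
  have := isProbabilityMeasure_erMeasure (n := n) h0 h1.le
  have hmean := integral_isolatedCount (n := n) h0 h1.le
  set E := (n : ℝ) * (1 - p) ^ (n - 1)
  have hE : 0 < E := by
    have : 0 < 1 - p := sub_pos.2 h1
    positivity
  have hset : {ω | isolatedCount n ω ≤ M} = {ω | (isolatedCount n ω : ℝ) ≤ M} := by
    simp only [Nat.cast_le]
  calc (erMeasure n p).real {ω | isolatedCount n ω ≤ M}
      ≤ variance (fun ω => (isolatedCount n ω : ℝ)) (erMeasure n p) / (E - M) ^ 2 := by
        rw [hset, ← hmean]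
        exact measureReal_le_le_variance_div_sq MemLp.of_discrete (by linarith)
    _ ≤ (E + E ^ 2 * (p / (1 - p))) / (E / 2) ^ 2 := by
        gcongr
        · exact variance_isolatedCount_le hn h0 h1
        · linarith
    _ = 4 / E + 4 * (p / (1 - p)) := by
        field_simp
        ring

end ErdosRenyi

section Asymptotics

open Real

lemma natCast_mul_one_sub_pow_le_exp {n : ℕ} {p c : ℝ} (hn : 1 ≤ n)
    (hp : p = (log n + c) / n) (hp1 : p ≤ 1) :
    n * (1 - p) ^ (n - 1) ≤ exp (1 - c) := by
  have hn0 : (0 : ℝ) < n := by exact_mod_cast hn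
  have hpn : p * n = log n + c := by rw [hp]; field_simp
  calc (n : ℝ) * (1 - p) ^ (n - 1) ≤ n * exp (-p) ^ (n - 1) := by
        gcongr
        linarith [add_one_le_exp (-p)]
    _ = exp (log n + (n - 1) * -p) := by
        rw [exp_add, exp_log hn0, ← exp_nat_mul, Nat.cast_pred hn]
    _ ≤ exp (1 - c) := exp_le_exp.2 (by nlinarith)

lemma neg_sub_le_log_natCast_mul_one_sub_pow {n : ℕ} {p c : ℝ} (hn : 1 ≤ n)
    (hp : p = (log n + c) / n) (hp0 : 0 ≤ p) (hp1 : p < 1) (hc : c ≤ 0) :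
    -c - p * log n / (1 - p) ≤ log (n * (1 - p) ^ (n - 1)) := by
  have hn0 : (0 : ℝ) < n := by exact_mod_cast hn
  have hq : 0 < 1 - p := sub_pos.2 hp1
  have hpn : n * p = log n + c := by rw [hp]; field_simp
  have hlogq : -(p / (1 - p)) ≤ log (1 - p) := by
    have := one_sub_inv_le_log_of_pos hq
    rwa [show 1 - (1 - p)⁻¹ = -(p / (1 - p)) by field_simp; ring] at this
  have hlogq0 : log (1 - p) ≤ 0 := log_nonpos hq.le (by linarith)
  have hcq : -c ≤ -c / (1 - p) := le_div_self (by linarith) hq (by linarith)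
  rw [log_mul hn0.ne' (pow_ne_zero _ hq.ne'), log_pow, Nat.cast_pred hn]
  calc -c - p * log n / (1 - p) ≤ (-c - p * log n) / (1 - p) := by rw [sub_div]; linarith
    _ = log n - n * (p / (1 - p)) := by field_simp; linarith
    _ ≤ log n + n * log (1 - p) := by nlinarith
    _ ≤ log n + (n - 1) * log (1 - p) := by linarith

lemma tendsto_log_pow_div_natCast (k : ℕ) :
    Tendsto (fun n : ℕ => log n ^ k / n) atTop (𝓝 0) := by
  simpa [Function.comp_def] using (tendsto_pow_log_div_mul_add_atTop 1 0 k one_ne_zero).comp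
    tendsto_natCast_atTop_atTop

variable {p c : ℕ → ℝ}

lemma tendsto_erMeasure_real_compl_nhds_one (hp : ∀ᶠ n in atTop, 0 ≤ p n ∧ p n ≤ 1)
    {s : ∀ n, Set (EdgeIdx n → Bool)}
    (hs : Tendsto (fun n => (erMeasure n (p n)).real (s n)) atTop (𝓝 0)) :
    Tendsto (fun n => (erMeasure n (p n)).real (s n)ᶜ) atTop (𝓝 1) := by
  have hsub : Tendsto (fun n => 1 - (erMeasure n (p n)).real (s n)) atTop (𝓝 1) := by
    simpa using tendsto_const_nhds.sub hs
  refine hsub.congr' (hp.mono fun n hn => ?_)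
  have := isProbabilityMeasure_erMeasure (n := n) hn.1 hn.2
  exact (probReal_compl_eq_one_sub MeasurableSet.of_discrete).symm

lemma tendsto_natCast_mul_one_sub_pow_nhds_zero
    (hp : ∀ᶠ n in atTop, p n = (log n + c n) / n ∧ 0 < p n ∧ p n < 1)
    (hc : Tendsto c atTop atTop) :
    Tendsto (fun n : ℕ => n * (1 - p n) ^ (n - 1)) atTop (𝓝 0) := by
  have hexp : Tendsto (fun n => exp (1 - c n)) atTop (𝓝 0) :=
    tendsto_exp_atBot.comp (tendsto_atBot_add_const_left _ 1 (tendsto_neg_atTop_atBot.comp hc))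
  refine squeeze_zero' (hp.mono fun n hn => ?_) ?_ hexp
  · have : 0 ≤ 1 - p n := by linarith [hn.2.2]
    positivity
  · filter_upwards [hp, eventually_ge_atTop 1] with n hn hn1
    exact natCast_mul_one_sub_pow_le_exp hn1 hn.1 hn.2.2.le

lemma eventually_le_log_div_natCast
    (hp : ∀ᶠ n in atTop, p n = (log n + c n) / n ∧ 0 < p n ∧ p n < 1)
    (hc : Tendsto c atTop atBot) :
    ∀ᶠ n : ℕ in atTop, p n ≤ log n / n := by
  filter_upwards [hp, hc.eventually_le_atBot 0] with n hn hcn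
  rw [hn.1]
  gcongr
  linarith

lemma tendsto_nhds_zero_of_tendsto_atBot
    (hp : ∀ᶠ n in atTop, p n = (log n + c n) / n ∧ 0 < p n ∧ p n < 1)
    (hc : Tendsto c atTop atBot) :
    Tendsto p atTop (𝓝 0) := by
  refine squeeze_zero' (hp.mono fun n hn => hn.2.1.le) (eventually_le_log_div_natCast hp hc) ?_
  simpa using tendsto_log_pow_div_natCast 1

lemma tendsto_mul_log_nhds_zero
    (hp : ∀ᶠ n in atTop, p n = (log n + c n) / n ∧ 0 < p n ∧ p n < 1)
    (hc : Tendsto c atTop atBot) :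
    Tendsto (fun n : ℕ => p n * log n) atTop (𝓝 0) := by
  refine squeeze_zero' ?_ ?_ (tendsto_log_pow_div_natCast 2)
  · filter_upwards [hp] with n hn
    exact mul_nonneg hn.2.1.le (log_natCast_nonneg n)
  · filter_upwards [eventually_le_log_div_natCast hp hc] with n hn
    calc p n * log n ≤ log n / n * log n := by gcongr
      _ = log n ^ 2 / n := by ring

lemma tendsto_natCast_mul_one_sub_pow_atTop
    (hp : ∀ᶠ n in atTop, p n = (log n + c n) / n ∧ 0 < p n ∧ p n < 1)
    (hc : Tendsto c atTop atBot) :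
    Tendsto (fun n : ℕ => n * (1 - p n) ^ (n - 1)) atTop atTop := by
  have hcorr : Tendsto (fun n => -(p n * log n / (1 - p n))) atTop (𝓝 0) := by
    simpa using ((tendsto_mul_log_nhds_zero hp hc).div
      (tendsto_const_nhds.sub (tendsto_nhds_zero_of_tendsto_atBot hp hc)) (by norm_num)).neg
  have hlow : Tendsto (fun n => -c n - p n * log n / (1 - p n)) atTop atTop := by
    simpa [sub_eq_add_neg] using (tendsto_neg_atBot_atTop.comp hc).atTop_add hcorr
  refine tendsto_atTop_mono' _ ?_ (tendsto_exp_atTop.comp hlow)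
  filter_upwards [hp, hc.eventually_le_atBot 0, eventually_ge_atTop 1] with n hn hcn hn1
  have : 0 < 1 - p n := by linarith [hn.2.2]
  rw [Function.comp_apply, ← le_log_iff_exp_le (by positivity)]
  exact neg_sub_le_log_natCast_mul_one_sub_pow hn1 hn.1 hn.2.1.le hn.2.2 hcn

lemma tendsto_erMeasure_real_isolatedCount_ne_zero
    (hp : ∀ᶠ n in atTop, p n = (log n + c n) / n ∧ 0 < p n ∧ p n < 1)
    (hc : Tendsto c atTop atTop) :
    Tendsto (fun n => (erMeasure n (p n)).real {ω | isolatedCount n ω ≠ 0}) atTop (𝓝 0) :=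
  squeeze_zero' (Eventually.of_forall fun _ => measureReal_nonneg)
    (hp.mono fun _ hn => erMeasure_real_isolatedCount_ne_zero_le hn.2.1.le hn.2.2.le)
    (tendsto_natCast_mul_one_sub_pow_nhds_zero hp hc)

lemma tendsto_erMeasure_real_isolatedCount_le
    (hp : ∀ᶠ n in atTop, p n = (log n + c n) / n ∧ 0 < p n ∧ p n < 1)
    (hc : Tendsto c atTop atBot) (M : ℕ) :
    Tendsto (fun n => (erMeasure n (p n)).real {ω | isolatedCount n ω ≤ M}) atTop (𝓝 0) := by
  have hE := tendsto_natCast_mul_one_sub_pow_atTop hp hc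
  have hp0 := tendsto_nhds_zero_of_tendsto_atBot hp hc
  have hbound : Tendsto (fun n : ℕ => 4 / (n * (1 - p n) ^ (n - 1)) + 4 * (p n / (1 - p n)))
      atTop (𝓝 0) := by
    simpa using (tendsto_const_nhds.div_atTop hE).add
      ((hp0.div (tendsto_const_nhds.sub hp0) (by norm_num)).const_mul 4)
  refine squeeze_zero' (Eventually.of_forall fun _ => measureReal_nonneg) ?_ hbound
  filter_upwards [hp, eventually_ge_atTop 2, hE.eventually_ge_atTop (2 * M)] with n hn hn2 hM
  exact erMeasure_real_isolatedCount_le_le hn2 hn.2.1.le hn.2.2 hM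

end Asymptotics

/-- Threshold for isolated vertices in the Erdős–Rényi graph `G(n, pₙ)` with
`pₙ = (log n + cₙ)/n` and `0 < pₙ < 1`:
(i) if `cₙ → ∞` then `Pₙ(Dₙ = 0) → 1`;
(ii) if `cₙ → −∞` then `Pₙ(Dₙ > M) → 1` for every positive integer `M`. -/
theorem er_isolated_vertices_threshold (p c : ℕ → ℝ)
    (hp : ∀ n : ℕ, 1 ≤ n → p n = (Real.log n + c n) / n ∧ 0 < p n ∧ p n < 1) :
    (Tendsto c atTop atTop →
      Tendsto (fun n : ℕ => (erMeasure n (p n) {ω | isolatedCount n ω = 0}).toReal)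
        atTop (nhds 1)) ∧
    (Tendsto c atTop atBot →
      ∀ M : ℕ, 1 ≤ M →
        Tendsto (fun n : ℕ => (erMeasure n (p n) {ω | M < isolatedCount n ω}).toReal)
          atTop (nhds 1)) := by
  have hp' : ∀ᶠ n in atTop, p n = (Real.log n + c n) / n ∧ 0 < p n ∧ p n < 1 :=
    (eventually_ge_atTop 1).mono hp
  have hp01 : ∀ᶠ n in atTop, 0 ≤ p n ∧ p n ≤ 1 := hp'.mono fun n hn => ⟨hn.2.1.le, hn.2.2.le⟩
  refine ⟨fun hc => ?_, fun hc M _ => ?_⟩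
  · simpa [Set.compl_ofPred, measureReal_def] using tendsto_erMeasure_real_compl_nhds_one hp01
      (tendsto_erMeasure_real_isolatedCount_ne_zero hp' hc)
  · simpa [Set.compl_ofPred, measureReal_def] using tendsto_erMeasure_real_compl_nhds_one hp01
      (tendsto_erMeasure_real_isolatedCount_le hp' hc M)
end

section
/- Distribution of the location of the first maximum of a symmetric random walk: let {X_j}_{j≥1} be i.i.d. real random variables whose common distribution μ is symmetric (μ(−B) = μ(B) for every Borel set B) and continuous (μ({x}) = 0 for every x ∈ ℝ), let S_0 = 0 and S_n = X_1 + ... + X_n, and let L_n be the smallest index j ∈ {0,1,...,n} at which S_j = max(S_0, S_1, ..., S_n). Then for every n ≥ 1 and every k ∈ {0,1,...,n}, P( L_n = k ) = binom(2k, k) · binom(2n−2k, n−k) / 2^{2n}. -/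
/-!
The first maximum of `S₀, …, S_{k+m}` sits at `k` exactly when the steps `X_{k-1}, …, X₀`, read
backwards, have strictly positive partial sums and the steps `X_k, …, X_{k+m-1}` have
nonpositive partial sums. These events depend on disjoint blocks of steps, so
`P(L_{k+m} = k) = p_k q_m`, where `p_m` (`q_m`) is the probability that `m` steps have positive
(nonpositive) partial sums. Symmetry turns `q_m` into the probability of nonnegative partial
sums, which is `p_m` because a partial sum vanishes with probability zero for a continuous step
law. Summing over `k` gives `∑ p_k p_{n-k} = 1` with `p₀ = 1`, which determines `p` recursively;
since `∑ C(2k,k) C(2n-2k,n-k) = 4ⁿ`, the solution is `p_m = C(2m,m) / 4^m`.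
-/

open MeasureTheory ProbabilityTheory Finset

theorem Nat.sum_antidiagonal_centralBinom_mul_centralBinom (n : ℕ) :
    ∑ p ∈ antidiagonal n, p.1.centralBinom * p.2.centralBinom = 4 ^ n := by
  set A : ℕ → ℕ := fun n => ∑ p ∈ antidiagonal n, p.1.centralBinom * p.2.centralBinom
  set B : ℕ → ℕ := fun n => ∑ p ∈ antidiagonal n, p.1 * (p.1.centralBinom * p.2.centralBinom)
  -- The symmetry `i ↔ j` gives `2 B n = n A n`, and `(i + 1) c_{i+1} = 2 (2i + 1) cᵢ` gives
  -- `B (n + 1) = 4 B n + 2 A n`; together, `A (n + 1) = 4 A n`.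
  have two_mul_B (n : ℕ) : 2 * B n = n * A n := by
    have B_swap : B n = ∑ p ∈ antidiagonal n, p.2 * (p.1.centralBinom * p.2.centralBinom) := by
      conv_rhs => rw [← Nat.sum_antidiagonal_swap]
      exact sum_congr rfl fun p _ => by simp only [Prod.fst_swap, Prod.snd_swap]; ring
    calc 2 * B n
        = B n + ∑ p ∈ antidiagonal n, p.2 * (p.1.centralBinom * p.2.centralBinom) := by
          rw [two_mul, ← B_swap]
      _ = n * A n := by
          rw [← sum_add_distrib, mul_sum]
          exact sum_congr rfl fun p hp => by rw [← add_mul, mem_antidiagonal.1 hp]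
  have B_succ (n : ℕ) : B (n + 1) = 4 * B n + 2 * A n := by
    simp only [B, A, Nat.sum_antidiagonal_succ, zero_mul, zero_add, mul_sum, ← sum_add_distrib]
    refine sum_congr rfl fun p _ => ?_
    rw [← mul_assoc, Nat.succ_mul_centralBinom_succ]
    ring
  induction n with
  | zero => simp
  | succ n ih =>
    have : (n + 1) * A (n + 1) = (n + 1) * 4 ^ (n + 1) := by
      calc (n + 1) * A (n + 1) = 2 * B (n + 1) := (two_mul_B _).symm
        _ = 4 * (2 * B n) + 4 * A n := by rw [B_succ]; ring
        _ = (n + 1) * 4 ^ (n + 1) := by rw [two_mul_B, show A n = 4 ^ n from ih]; ring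
    exact Nat.eq_of_mul_eq_mul_left n.succ_pos this

theorem sum_range_centralBinom_div_mul_centralBinom_div (n : ℕ) :
    ∑ k ∈ range (n + 1), ((k.centralBinom : ℝ) / 4 ^ k) * ((n - k).centralBinom / 4 ^ (n - k)) =
      1 := by
  have h := congr_arg (Nat.cast : ℕ → ℝ) (Nat.sum_antidiagonal_centralBinom_mul_centralBinom n)
  rw [Nat.sum_antidiagonal_eq_sum_range_succ_mk] at h
  push_cast at h
  calc _ = (∑ k ∈ range (n + 1), (k.centralBinom : ℝ) * (n - k).centralBinom) / 4 ^ n := by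
        rw [sum_div]
        refine sum_congr rfl fun k hk => ?_
        rw [div_mul_div_comm, ← pow_add, Nat.add_sub_cancel' (mem_range_succ_iff.1 hk)]
    _ = 1 := by rw [h, div_self (by positivity)]

lemma sum_range_mul_self_succ {R : Type*} [CommRing R] {F : ℕ → R} (h0 : F 0 = 1) (n : ℕ) :
    ∑ k ∈ range (n + 2), F k * F (n + 1 - k) =
      2 * F (n + 1) + ∑ k ∈ range n, F (k + 1) * F (n - k) := by
  rw [sum_range_succ', sum_range_succ]
  simp only [Nat.add_sub_add_right, Nat.sub_self, Nat.sub_zero, h0]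
  ring

theorem eq_of_sum_range_mul_self_eq {K : Type*} [Field K] [CharZero K] {F G : ℕ → K}
    (hF : F 0 = 1) (hG : G 0 = 1)
    (h : ∀ n, ∑ k ∈ range (n + 1), F k * F (n - k) = ∑ k ∈ range (n + 1), G k * G (n - k)) :
    F = G := by
  funext m
  induction m using Nat.strong_induction_on with
  | _ m ih =>
    rcases m with _ | n
    · rw [hF, hG]
    · have hlow : ∑ k ∈ range n, F (k + 1) * F (n - k) = ∑ k ∈ range n, G (k + 1) * G (n - k) :=
        sum_congr rfl fun k hk => by
          have := mem_range.1 hk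
          rw [ih (k + 1) (by omega), ih (n - k) (by omega)]
      have := h (n + 1)
      rw [sum_range_mul_self_succ hF, sum_range_mul_self_succ hG, hlow, add_left_inj] at this
      exact mul_left_cancel₀ two_ne_zero this

theorem eq_centralBinom_div_four_pow_of_sum_range_mul_self {F : ℕ → ℝ} (h0 : F 0 = 1)
    (h : ∀ n, ∑ k ∈ range (n + 1), F k * F (n - k) = 1) (m : ℕ) :
    F m = m.centralBinom / 4 ^ m := by
  refine congr_fun (eq_of_sum_range_mul_self_eq (G := fun m => (m.centralBinom : ℝ) / 4 ^ m)
    h0 (by simp) fun n => ?_) m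
  rw [h, sum_range_centralBinom_div_mul_centralBinom_div]

section FirstMax

variable {α : Type*} [LinearOrder α] {s : ℕ → α} {n k : ℕ}

def IsFirstMax (s : ℕ → α) (n k : ℕ) : Prop := (∀ i ≤ n, s i ≤ s k) ∧ ∀ i < k, s i < s k

lemma IsFirstMax.eq {k' : ℕ} (h : IsFirstMax s n k) (h' : IsFirstMax s n k') (hk : k ≤ n)
    (hk' : k' ≤ n) : k = k' :=
  le_antisymm (not_lt.1 fun hlt => (h.2 _ hlt).not_ge (h'.1 k hk))
    (not_lt.1 fun hlt => (h'.2 _ hlt).not_ge (h.1 k' hk'))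

lemma exists_isFirstMax (s : ℕ → α) (n : ℕ) : ∃ k ≤ n, IsFirstMax s n k := by
  classical
  have hmax : ∃ k, k ≤ n ∧ ∀ i ≤ n, s i ≤ s k := by
    obtain ⟨k, hk, hmax⟩ := exists_max_image (range (n + 1)) s nonempty_range_add_one
    exact ⟨k, mem_range_succ_iff.1 hk, fun i hi => hmax i (mem_range_succ_iff.2 hi)⟩
  obtain ⟨hkn, hk⟩ := Nat.find_spec hmax
  refine ⟨Nat.find hmax, hkn, hk, fun i hi => lt_of_not_ge fun hle => ?_⟩
  exact Nat.find_min hmax hi ⟨hi.le.trans hkn, fun j hj => (hk j hj).trans hle⟩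

lemma isFirstMax_add_iff {m : ℕ} :
    IsFirstMax s (k + m) k ↔ (∀ i < k, s i < s k) ∧ ∀ j ≤ m, s (k + j) ≤ s k := by
  refine ⟨fun h => ⟨h.2, fun j hj => h.1 _ (by omega)⟩, fun ⟨hlt, hle⟩ => ⟨fun i hi => ?_, hlt⟩⟩
  rcases lt_or_ge i k with hik | hik
  · exact (hlt i hik).le
  · simpa [Nat.add_sub_cancel' hik] using hle (i - k) (by omega)

end FirstMax

def partialSum {m : ℕ} (v : Fin m → ℝ) (j : ℕ) : ℝ := ∑ i : Fin m with i.val < j, v i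

def partialSumsPos (m : ℕ) : Set (Fin m → ℝ) := {v | ∀ j ∈ Icc 1 m, 0 < partialSum v j}

def partialSumsNonpos (m : ℕ) : Set (Fin m → ℝ) := {v | ∀ j ∈ Icc 1 m, partialSum v j ≤ 0}

lemma partialSumsPos_zero : partialSumsPos 0 = Set.univ :=
  Set.eq_univ_of_forall fun _ j hj => absurd (mem_Icc.1 hj) (by omega)

lemma partialSum_comp_val {m j : ℕ} (x : ℕ → ℝ) (hj : j ≤ m) :
    partialSum (fun i : Fin m => x i) j = ∑ l ∈ range j, x l := by
  rw [partialSum, sum_filter, Fin.sum_univ_eq_sum_range (fun l => if l < j then x l else 0),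
    ← sum_filter]
  congr 1
  ext l
  simp only [mem_filter, mem_range]
  omega

lemma partialSum_neg {m : ℕ} (v : Fin m → ℝ) (j : ℕ) : partialSum (-v) j = -partialSum v j := by
  simp [partialSum]

@[fun_prop]
lemma measurable_partialSum {m : ℕ} (j : ℕ) : Measurable fun v : Fin m → ℝ => partialSum v j := by
  unfold partialSum; fun_prop

lemma measurableSet_forall_partialSum_mem {m : ℕ} {t : Set ℝ} (ht : MeasurableSet t) :
    MeasurableSet {v : Fin m → ℝ | ∀ j ∈ Icc 1 m, partialSum v j ∈ t} := by
  simp only [Set.ofPred_forall]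
  exact .iInter fun j => .iInter fun _ => measurable_partialSum j ht

lemma measurableSet_partialSumsPos (m : ℕ) : MeasurableSet (partialSumsPos m) :=
  measurableSet_forall_partialSum_mem measurableSet_Ioi

lemma measurableSet_partialSumsNonpos (m : ℕ) : MeasurableSet (partialSumsNonpos m) :=
  measurableSet_forall_partialSum_mem measurableSet_Iic

lemma sum_range_reverse {M : Type*} [AddCommGroup M] (x : ℕ → M) (a j : ℕ) :
    ∑ l ∈ range j, x (a + j - 1 - l) = ∑ l ∈ range (a + j), x l - ∑ l ∈ range a, x l := by
  rw [sum_range_add, add_sub_cancel_left, ← sum_range_reflect (fun l => x (a + l))]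
  exact sum_congr rfl fun l hl => by have := mem_range.1 hl; congr 1; omega

lemma reverse_mem_partialSumsPos_iff (x : ℕ → ℝ) (k : ℕ) :
    (fun i : Fin k => x (k - 1 - i)) ∈ partialSumsPos k ↔
      ∀ i < k, ∑ l ∈ range i, x l < ∑ l ∈ range k, x l := by
  have hsum (j : ℕ) (hj : j ≤ k) : partialSum (fun i : Fin k => x (k - 1 - i)) j =
      ∑ l ∈ range k, x l - ∑ l ∈ range (k - j), x l := by
    have := sum_range_reverse x (k - j) j
    rwa [Nat.sub_add_cancel hj, ← partialSum_comp_val (fun l => x (k - 1 - l)) hj] at this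
  simp only [partialSumsPos, Set.mem_ofPred_eq, mem_Icc]
  constructor
  · intro h i hi
    have := h (k - i) ⟨by omega, by omega⟩
    rwa [hsum _ (by omega), Nat.sub_sub_self hi.le, sub_pos] at this
  · intro h j ⟨hj1, hjk⟩
    rw [hsum j hjk, sub_pos]
    exact h _ (by omega)

lemma shift_mem_partialSumsNonpos_iff (x : ℕ → ℝ) (k m : ℕ) :
    (fun i : Fin m => x (k + i)) ∈ partialSumsNonpos m ↔
      ∀ j ≤ m, ∑ l ∈ range (k + j), x l ≤ ∑ l ∈ range k, x l := by
  have hsum (j : ℕ) (hj : j ≤ m) : partialSum (fun i : Fin m => x (k + i)) j =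
      ∑ l ∈ range (k + j), x l - ∑ l ∈ range k, x l := by
    rw [partialSum_comp_val (fun l => x (k + l)) hj, sum_range_add, add_sub_cancel_left]
  simp only [partialSumsNonpos, Set.mem_ofPred_eq, mem_Icc]
  constructor
  · intro h j hj
    rcases j.eq_zero_or_pos with rfl | hj0
    · simp
    · simpa [hsum j hj] using h j ⟨hj0, hj⟩
  · intro h j ⟨_, hjm⟩
    simpa [hsum j hjm] using h j hjm

namespace ProbabilityTheory

variable {Ω : Type*} [MeasurableSpace Ω] {P : Measure Ω}

theorem IndepFun.measure_add_eq_eq_zero {G : Type*} [AddGroup G] [MeasurableSpace G]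
    [MeasurableAdd₂ G] [MeasurableSingletonClass G] [IsFiniteMeasure P] {X Y : Ω → G}
    (hXY : IndepFun X Y P) (hX : Measurable X) (hY : Measurable Y) [NullSingletonClass (P.map Y)]
    (c : G) : P {ω | X ω + Y ω = c} = 0 := by
  have hD : MeasurableSet {p : G × G | p.1 + p.2 = c} :=
    (measurable_fst.add measurable_snd) (measurableSet_singleton c)
  have hfiber (x : G) : Prod.mk x ⁻¹' {p : G × G | p.1 + p.2 = c} = {-x + c} := by
    ext y
    simp [eq_neg_add_iff_add_eq]
  calc P {ω | X ω + Y ω = c} = P.map (fun ω => (X ω, Y ω)) {p | p.1 + p.2 = c} :=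
        (Measure.map_apply (hX.prodMk hY) hD).symm
    _ = ∫⁻ x, P.map Y {-x + c} ∂P.map X := by
        rw [hXY.map_prod_eq_prod_map_map hX.aemeasurable hY.aemeasurable, Measure.prod_apply hD]
        simp only [hfiber]
    _ = 0 := by simp

theorem iIndepFun.map_comp_eq_pi [IsProbabilityMeasure P] {ι κ β : Type*} [Fintype κ]
    [MeasurableSpace β] {X : ι → Ω → β} {μ : Measure β} (hind : iIndepFun X P)
    (hmeas : ∀ i, Measurable (X i)) (hdist : ∀ i, P.map (X i) = μ) {f : κ → ι}
    (hf : f.Injective) :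
    P.map (fun ω a => X (f a) ω) = Measure.pi fun _ => μ := by
  rw [(hind.precomp hf).map_fun_eq_pi_map fun a => (hmeas (f a)).aemeasurable]
  simp only [hdist]

theorem iIndepFun.indepFun_comp_of_disjoint {ι κ κ' β : Type*} [Fintype κ] [Fintype κ']
    [MeasurableSpace β] {X : ι → Ω → β} (hind : iIndepFun X P) (hmeas : ∀ i, Measurable (X i))
    {f : κ → ι} {g : κ' → ι} (hfg : ∀ a b, f a ≠ g b) :
    IndepFun (fun ω a => X (f a) ω) (fun ω b => X (g b) ω) P := by
  classical
  have hdisj : Disjoint (univ.image f) (univ.image g) := by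
    simp only [disjoint_left, mem_image, mem_univ, true_and, not_exists]
    rintro _ ⟨a, rfl⟩ b hb
    exact hfg a b hb.symm
  exact (hind.indepFun_finset _ _ hdisj hmeas).comp
    (measurable_pi_lambda _ fun a => measurable_pi_apply ⟨f a, mem_image_of_mem f (mem_univ a)⟩)
    (measurable_pi_lambda _ fun b => measurable_pi_apply ⟨g b, mem_image_of_mem g (mem_univ b)⟩)

end ProbabilityTheory

section Symmetry

variable (μ : Measure ℝ) [IsProbabilityMeasure μ]

theorem pi_setOf_partialSum_eq_zero [NullSingletonClass μ] {m j : ℕ} (hj : j ∈ Icc 1 m) :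
    Measure.pi (fun _ : Fin m => μ) {v | partialSum v j = 0} = 0 := by
  obtain ⟨hj1, hjm⟩ := mem_Icc.1 hj
  set i₀ : Fin m := ⟨j - 1, by omega⟩
  set s : Finset (Fin m) := {i | i.val < j - 1}
  have hi₀ : i₀ ∉ s := by simp [s, i₀]
  have hsplit (v : Fin m → ℝ) : partialSum v j = ∑ i ∈ s, v i + v i₀ := by
    rw [add_comm, ← sum_insert hi₀, partialSum]
    congr 1
    ext i
    simp only [mem_filter, mem_univ, true_and, mem_insert, s, i₀, Fin.ext_iff]
    omega
  have hindep := (iIndepFun_pi (μ := fun _ : Fin m => μ) (X := fun _ => id)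
    fun _ => aemeasurable_id).indepFun_finsetSum_of_notMem (fun _ => measurable_pi_apply _) hi₀
  simp only [id] at hindep
  have : NullSingletonClass ((Measure.pi fun _ : Fin m => μ).map fun v => v i₀) := by
    rw [(measurePreserving_eval _ i₀).map_eq]; infer_instance
  convert hindep.measure_add_eq_eq_zero (by fun_prop) (measurable_pi_apply i₀) 0 using 3
  simp [hsplit]

theorem pi_partialSumsNonpos_eq_pi_partialSumsPos (hsym : μ.map Neg.neg = μ)
    [NullSingletonClass μ] (m : ℕ) :
    Measure.pi (fun _ : Fin m => μ) (partialSumsNonpos m) =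
      Measure.pi (fun _ : Fin m => μ) (partialSumsPos m) := by
  set ν := Measure.pi fun _ : Fin m => μ
  have hneg : ν.map Neg.neg = ν := by
    have := Measure.pi_map_pi (μ := fun _ : Fin m => μ) (f := fun _ => Neg.neg)
      fun _ => measurable_neg.aemeasurable
    rwa [hsym] at this
  have hnonneg : partialSumsNonpos m = Neg.neg ⁻¹' {v | ∀ j ∈ Icc 1 m, 0 ≤ partialSum v j} := by
    ext v
    simp [partialSumsNonpos, partialSum_neg]
  have hnull : ν (⋃ j ∈ Icc 1 m, {v | partialSum v j = 0}) = 0 :=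
    measure_iUnion_null fun j => measure_iUnion_null fun hj => pi_setOf_partialSum_eq_zero μ hj
  have hmeas : MeasurableSet {v : Fin m → ℝ | ∀ j ∈ Icc 1 m, 0 ≤ partialSum v j} :=
    measurableSet_forall_partialSum_mem measurableSet_Ici
  rw [hnonneg, ← Measure.map_apply measurable_neg hmeas, hneg]
  refine le_antisymm (measure_mono_ae (ae_le_set.2 (measure_mono_null ?_ hnull)))
    (measure_mono fun v hv j hj => (hv j hj).le)
  rintro v ⟨hv, hpos⟩
  simp only [partialSumsPos, Set.mem_ofPred_eq, not_forall, not_lt] at hpos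
  obtain ⟨j, hj, hle⟩ := hpos
  exact Set.mem_biUnion hj (le_antisymm hle (hv j hj))

end Symmetry

section RandomWalk

variable {Ω : Type*} [MeasurableSpace Ω] {P : Measure Ω}

theorem measurableSet_isFirstMax {S : ℕ → Ω → ℝ} (hS : ∀ i, Measurable (S i)) (n k : ℕ) :
    MeasurableSet {ω | IsFirstMax (fun i => S i ω) n k} := by
  simp only [IsFirstMax, Set.ofPred_and, Set.ofPred_forall]
  exact (MeasurableSet.iInter fun i => .iInter fun _ => measurableSet_le (hS i) (hS k)).inter
    (MeasurableSet.iInter fun i => .iInter fun _ => measurableSet_lt (hS i) (hS k))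

theorem sum_measure_isFirstMax [IsProbabilityMeasure P] {S : ℕ → Ω → ℝ}
    (hS : ∀ i, Measurable (S i)) (n : ℕ) :
    ∑ k ∈ range (n + 1), P {ω | IsFirstMax (fun i => S i ω) n k} = 1 := by
  have hcover : ⋃ k ∈ range (n + 1), {ω | IsFirstMax (fun i => S i ω) n k} = Set.univ := by
    refine Set.eq_univ_of_forall fun ω => ?_
    obtain ⟨k, hk, h⟩ := exists_isFirstMax (fun i => S i ω) n
    exact Set.mem_biUnion (mem_range_succ_iff.2 hk) h
  rw [← measure_biUnion_finset _ fun k _ => measurableSet_isFirstMax hS n k, hcover, measure_univ]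
  intro k hk k' hk' hne
  exact Set.disjoint_left.2 fun ω h h' =>
    hne (h.eq h' (mem_range_succ_iff.1 (mem_coe.1 hk)) (mem_range_succ_iff.1 (mem_coe.1 hk')))

theorem measure_isFirstMax_add [IsProbabilityMeasure P] {μ : Measure ℝ} {X : ℕ → Ω → ℝ}
    (hmeas : ∀ j, Measurable (X j)) (hdist : ∀ j, P.map (X j) = μ) (hind : iIndepFun X P)
    (k m : ℕ) :
    P {ω | IsFirstMax (fun i => ∑ l ∈ range i, X l ω) (k + m) k} =
      Measure.pi (fun _ : Fin k => μ) (partialSumsPos k) *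
        Measure.pi (fun _ : Fin m => μ) (partialSumsNonpos m) := by
  have hrev : Function.Injective fun i : Fin k => k - 1 - (i : ℕ) := fun a b h =>
    Fin.ext (by have := a.2; have := b.2; simp only at h; omega)
  have hshift : Function.Injective fun i : Fin m => k + (i : ℕ) := fun a b h =>
    Fin.ext (by simpa using h)
  have hevent : {ω | IsFirstMax (fun i => ∑ l ∈ range i, X l ω) (k + m) k} =
      (fun ω (i : Fin k) => X (k - 1 - i) ω) ⁻¹' partialSumsPos k ∩
        (fun ω (i : Fin m) => X (k + i) ω) ⁻¹' partialSumsNonpos m := by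
    ext ω
    rw [Set.mem_ofPred_eq, isFirstMax_add_iff]
    exact and_congr (reverse_mem_partialSumsPos_iff (fun l => X l ω) k).symm
      (shift_mem_partialSumsNonpos_iff (fun l => X l ω) k m).symm
  have hindep := hind.indepFun_comp_of_disjoint hmeas (f := fun i : Fin k => k - 1 - (i : ℕ))
    (g := fun i : Fin m => k + (i : ℕ)) fun a b => by have := a.2; omega
  rw [hevent, hindep.measure_inter_preimage_eq_mul _ _ (measurableSet_partialSumsPos k)
      (measurableSet_partialSumsNonpos m),
    ← Measure.map_apply (by fun_prop) (measurableSet_partialSumsPos k),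
    ← Measure.map_apply (by fun_prop) (measurableSet_partialSumsNonpos m),
    hind.map_comp_eq_pi hmeas hdist hrev, hind.map_comp_eq_pi hmeas hdist hshift]

end RandomWalk

theorem sparre_andersen_first_maximum_general {Ω : Type*} [MeasurableSpace Ω] (P : Measure Ω)
    [IsProbabilityMeasure P] (μ : Measure ℝ) [IsProbabilityMeasure μ]
    (hsym : ∀ B : Set ℝ, MeasurableSet B → μ ((fun x => -x) ⁻¹' B) = μ B)
    (hcont : ∀ x : ℝ, μ {x} = 0)
    (X : ℕ → Ω → ℝ)
    (hmeas : ∀ j, Measurable (X j))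
    (hdist : ∀ j, Measure.map (X j) P = μ)
    (hind : iIndepFun X P)
    (n k : ℕ) (hk : k ≤ n) :
    (P {ω | (∀ i ≤ n, ∑ l ∈ Finset.range i, X l ω ≤ ∑ l ∈ Finset.range k, X l ω) ∧
        (∀ i < k, ∑ l ∈ Finset.range i, X l ω < ∑ l ∈ Finset.range k, X l ω)}).toReal =
      ((2 * k).choose k : ℝ) * ((2 * n - 2 * k).choose (n - k) : ℝ) / 2 ^ (2 * n) := by
  have : NullSingletonClass μ := ⟨hcont⟩
  have hsym' : μ.map Neg.neg = μ := Measure.ext fun B hB => by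
    rw [Measure.map_apply measurable_neg hB, ← hsym B hB]
  have hS (i : ℕ) : Measurable fun ω => ∑ l ∈ range i, X l ω :=
    Finset.measurable_sum _ fun l _ => hmeas l
  set F : ℕ → ℝ := fun m => (Measure.pi (fun _ : Fin m => μ) (partialSumsPos m)).toReal
  have hfirstMax (k m : ℕ) :
      (P {ω | IsFirstMax (fun i => ∑ l ∈ range i, X l ω) (k + m) k}).toReal = F k * F m := by
    rw [measure_isFirstMax_add hmeas hdist hind, pi_partialSumsNonpos_eq_pi_partialSumsPos μ hsym',
      ENNReal.toReal_mul]
  have hF (m : ℕ) : F m = m.centralBinom / 4 ^ m := by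
    refine eq_centralBinom_div_four_pow_of_sum_range_mul_self ?_ (fun N => ?_) m
    · simp [F, partialSumsPos_zero]
    · rw [← ENNReal.toReal_one, ← sum_measure_isFirstMax (P := P) hS N,
        ENNReal.toReal_sum fun _ _ => measure_ne_top P _]
      refine sum_congr rfl fun k hk => ?_
      rw [← hfirstMax, Nat.add_sub_cancel' (mem_range_succ_iff.1 hk)]
  obtain ⟨m, rfl⟩ := Nat.exists_eq_add_of_le hk
  change (P {ω | IsFirstMax (fun i => ∑ l ∈ range i, X l ω) (k + m) k}).toReal = _
  rw [hfirstMax, hF, hF, Nat.centralBinom_eq_two_mul_choose, Nat.centralBinom_eq_two_mul_choose,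
    show 2 * (k + m) - 2 * k = 2 * m by omega, Nat.add_sub_cancel_left, pow_mul, pow_add,
    div_mul_div_comm]
  norm_num

/-- Distribution of the location of the first maximum of a symmetric random walk: for
i.i.d. steps with symmetric continuous common distribution `μ` and partial sums
`Sⱼ = X₀ + ⋯ + X_{j-1}` (so `S₀ = 0`), the least index `k ∈ {0,…,n}` at which
`S_k = max(S₀,…,Sₙ)` (equivalently: `Sᵢ ≤ S_k` for all `i ≤ n` and `Sᵢ < S_k` for all
`i < k`) satisfies `P(Lₙ = k) = C(2k,k) C(2n-2k,n-k) / 2^{2n}`. -/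
theorem sparre_andersen_first_maximum {Ω : Type*} [MeasurableSpace Ω] (P : Measure Ω)
    [IsProbabilityMeasure P] (μ : Measure ℝ) [IsProbabilityMeasure μ]
    (hsym : ∀ B : Set ℝ, MeasurableSet B → μ ((fun x => -x) ⁻¹' B) = μ B)
    (hcont : ∀ x : ℝ, μ {x} = 0)
    (X : ℕ → Ω → ℝ)
    (hmeas : ∀ j, Measurable (X j))
    (hdist : ∀ j, Measure.map (X j) P = μ)
    (hind : iIndepFun X P)
    (n k : ℕ) (hn : 1 ≤ n) (hk : k ≤ n) :
    (P {ω | (∀ i ≤ n, ∑ l ∈ Finset.range i, X l ω ≤ ∑ l ∈ Finset.range k, X l ω) ∧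
        (∀ i < k, ∑ l ∈ Finset.range i, X l ω < ∑ l ∈ Finset.range k, X l ω)}).toReal =
      ((2 * k).choose k : ℝ) * ((2 * n - 2 * k).choose (n - k) : ℝ) / 2 ^ (2 * n) :=
  sparre_andersen_first_maximum_general P μ hsym hcont X hmeas hdist hind n k hk
end

section
/- Probability that a symmetric random walk stays positive: let {X_j}_{j≥1} be i.i.d. real random variables whose common distribution μ is symmetric (μ(−B) = μ(B) for every Borel set B) and continuous (μ({x}) = 0 for every x ∈ ℝ), and let S_n = X_1 + ... + X_n. Then for every n ≥ 1, P( S_1 > 0, S_2 > 0, ..., S_n > 0 ) = binom(2n, n) / 2^{2n}. -/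
/-!
Let `Sₖ` be the partial sums and, for `n` fixed, split the path according to the index `k ≤ n`
at which `max (S₀, …, Sₙ)` is attained; by continuity of `μ` there are almost surely no ties, so
these events partition the sample space. The maximum is at `k` iff the reversed path
`Sₖ - Sₖ₋₁, Sₖ - Sₖ₋₂, …` stays positive for `k` steps and the path after time `k` stays
negative for `n - k` steps. These two events depend on disjoint blocks of steps; reversal and
(by symmetry of `μ`) negation preserve the law of the steps, so writing `rₙ` for the probability
of staying positive for `n` steps, `∑ₖ rₖ rₙ₋ₖ = 1`. Thus `(∑ rₙ xⁿ)² = (1 - x)⁻¹`, whose unique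
square root with constant term `1` is `∑ C(2n,n) (x/4)ⁿ`.
-/

open MeasureTheory ProbabilityTheory Finset Measure

section

variable {ι α : Type*} [MeasurableSpace α] (μ : Measure α) [IsProbabilityMeasure μ]

theorem measurePreserving_infinitePi_comp {κ : Type*} {f : κ → ι} (hf : f.Injective) :
    MeasurePreserving (fun (y : ι → α) i => y (f i)) (infinitePi fun _ => μ)
      (infinitePi fun _ => μ) :=
  ⟨by fun_prop, map_infinitePi_infinitePi_of_inj hf⟩

theorem measurePreserving_neg_infinitePi [Neg α] [MeasurableNeg α] [μ.IsNegInvariant] :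
    MeasurePreserving (fun y : ι → α => -y) (infinitePi fun _ => μ) (infinitePi fun _ => μ) := by
  refine ⟨measurable_neg, ?_⟩
  have := infinitePi_map_pi (fun _ : ι => μ) (f := fun _ => Neg.neg) (fun _ => measurable_neg)
  rwa [← Measure.neg_def, neg_eq_self] at this

-- `hAs` and `hBt` say that `A` only depends on the coordinates in `s`, and `B` on those in `t`.
theorem infinitePi_inter_eq_mul [Zero α] {s t : Set ι} (hst : Disjoint s t)
    {A B : Set (ι → α)} (hA : MeasurableSet A) (hB : MeasurableSet B)
    (hAs : ∀ y, s.indicator y ∈ A ↔ y ∈ A) (hBt : ∀ y, t.indicator y ∈ B ↔ y ∈ B) :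
    infinitePi (fun _ => μ) (A ∩ B) = infinitePi (fun _ => μ) A * infinitePi (fun _ => μ) B := by
  let m : ι → MeasurableSpace (ι → α) := fun i => MeasurableSpace.comap (fun y => y i) ‹_›
  have hindep : Indep (⨆ i ∈ s, m i) (⨆ i ∈ t, m i) (infinitePi fun _ => μ) := by
    refine indep_iSup_of_disjoint (fun i => (measurable_pi_apply i).comap_le) ?_ hst
    exact (iIndepFun_iff_iIndep _ _ _).mp
      (iIndepFun_infinitePi (X := fun _ x => x) fun _ => measurable_id)
  have hmeas : ∀ (u : Set ι) (C : Set (ι → α)), MeasurableSet C →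
      (∀ y, u.indicator y ∈ C ↔ y ∈ C) → MeasurableSet[⨆ i ∈ u, m i] C := by
    intro u C hC hCu
    have hind : Measurable[⨆ i ∈ u, m i] (fun y : ι → α => u.indicator y) := by
      refine (@measurable_pi_iff (ι → α) ι (fun _ => α) (⨆ i ∈ u, m i) _ _).mpr fun i => ?_
      by_cases hi : i ∈ u
      · simp only [Set.indicator_of_mem hi]
        exact (comap_measurable _).mono (le_iSup₂ (f := fun i _ => m i) i hi) le_rfl
      · simp only [Set.indicator_of_notMem hi]
        exact measurable_const
    have := hind hC
    rwa [show (fun y : ι → α => u.indicator y) ⁻¹' C = C from Set.ext hCu] at this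
  exact (Indep_iff _ _ _).mp hindep A B (hmeas s A hA hAs) (hmeas t B hB hBt)

end

theorem ProbabilityTheory.IndepFun.measure_setOf_eq_eq_zero {Ω E : Type*} [MeasurableSpace Ω]
    [MeasurableSpace E] [MeasurableEq E] {P : Measure Ω} [IsFiniteMeasure P] {X Y : Ω → E}
    (hXY : IndepFun X Y P) (hX : Measurable X) (hY : Measurable Y)
    [NullSingletonClass (P.map Y)] :
    P {ω | X ω = Y ω} = 0 := by
  change P ((fun ω => (X ω, Y ω)) ⁻¹' Set.diagonal E) = 0
  rw [← map_apply (hX.prodMk hY) measurableSet_diagonal,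
    (indepFun_iff_map_prod_eq_prod_map_map hX.aemeasurable hY.aemeasurable).mp hXY,
    Measure.prod_apply measurableSet_diagonal]
  have hslice : ∀ x : E, Prod.mk x ⁻¹' Set.diagonal E = {x} := fun x => by
    ext
    simp [Set.diagonal, eq_comm]
  simp [hslice]

theorem Nat.centralBinom_succ_div_four_pow_mul (n : ℕ) :
    ((n + 1).centralBinom : ℝ) / 4 ^ (n + 1) * (n + 1) =
      n.centralBinom / 4 ^ n * (n + 1 / 2) := by
  have h : ((n + 1 : ℕ) : ℝ) * (n + 1).centralBinom = 2 * (2 * n + 1) * n.centralBinom := by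
    exact_mod_cast Nat.succ_mul_centralBinom_succ n
  rw [pow_succ, div_mul_eq_mul_div, div_mul_eq_mul_div,
    div_eq_div_iff (by positivity) (by positivity)]
  push_cast at h
  linear_combination (4 ^ n : ℝ) * h

namespace PowerSeries

theorem eq_of_mul_self_eq_mul_self {R : Type*} [CommRing R] [IsDomain R] [CharZero R]
    {f g : R⟦X⟧} (hfg : f * f = g * g) (hc : constantCoeff f = constantCoeff g)
    (hc0 : constantCoeff g ≠ 0) : f = g := by
  refine (mul_self_eq_mul_self_iff.mp hfg).resolve_right fun hneg => hc0 ?_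
  rw [hneg, map_neg, neg_eq_iff_add_eq_zero] at hc
  simpa [← two_mul] using hc

theorem mul_self_mk_centralBinom_div_four_pow :
    (mk fun n => (n.centralBinom : ℝ) / 4 ^ n) * mk (fun n => (n.centralBinom : ℝ) / 4 ^ n) =
      mk 1 := by
  set U : ℝ⟦X⟧ := mk fun n => (n.centralBinom : ℝ) / 4 ^ n
  -- `U = (1 - X)^(-1/2)` solves `2 (1 - X) U' = U`, so `(1 - X) U²` has derivative zero.
  have hode : (2 : ℝ) • ((1 - X) * d⁄dX ℝ U) = U := by
    ext (_ | n)
    · rw [coeff_smul, sub_mul, one_mul, map_sub, coeff_zero_X_mul, coeff_derivative]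
      have h := Nat.centralBinom_succ_div_four_pow_mul 0
      push_cast at h ⊢
      simp only [U, coeff_mk]
      linear_combination 2 * h
    · rw [coeff_smul, sub_mul, one_mul, map_sub, coeff_succ_X_mul, coeff_derivative,
        coeff_derivative]
      have h := Nat.centralBinom_succ_div_four_pow_mul (n + 1)
      push_cast at h ⊢
      simp only [U, coeff_mk]
      linear_combination 2 * h
  have hconst : (1 - X) * (U * U) = 1 := by
    refine derivative.ext ?_ (by simp [U])
    rw [two_smul] at hode
    rw [Derivation.leibniz, Derivation.leibniz, Derivation.map_one_eq_zero]
    simp only [smul_eq_mul, map_sub, Derivation.map_one_eq_zero, derivative_X, zero_sub, mul_neg,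
      mul_one]
    linear_combination U * hode
  calc U * U = mk 1 * ((1 - X) * (U * U)) := by
        rw [← mul_assoc, mk_one_mul_one_sub_eq_one, one_mul]
    _ = mk 1 := by rw [hconst, mul_one]

end PowerSeries

namespace SymmetricWalk

def walk (y : ℕ → ℝ) (j : ℕ) : ℝ := ∑ i ∈ range j, y i

def stayPos (n : ℕ) : Set (ℕ → ℝ) := {y | ∀ j, 1 ≤ j → j ≤ n → 0 < walk y j}

theorem stayPos_zero : stayPos 0 = Set.univ :=
  Set.eq_univ_of_forall fun _ _ h1 h2 => by omega

def recordAt (k : ℕ) : Set (ℕ → ℝ) := {y | ∀ j < k, walk y j < walk y k}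

def argmaxAt (n k : ℕ) : Set (ℕ → ℝ) := {y | ∀ j ≤ n, j ≠ k → walk y j < walk y k}

def reverse (k i : ℕ) : ℕ := if i < k then k - 1 - i else i

@[fun_prop]
theorem measurable_walk (j : ℕ) : Measurable fun y => walk y j :=
  Finset.measurable_sum _ fun i _ => measurable_pi_apply i

theorem measurableSet_stayPos (n : ℕ) : MeasurableSet (stayPos n) := by
  simp only [stayPos, Set.ofPred_forall]
  measurability

theorem measurableSet_recordAt (k : ℕ) : MeasurableSet (recordAt k) := by
  simp only [recordAt, Set.ofPred_forall]
  measurability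

theorem measurableSet_argmaxAt (n k : ℕ) : MeasurableSet (argmaxAt n k) := by
  simp only [argmaxAt, Set.ofPred_forall]
  measurability

theorem walk_congr {y z : ℕ → ℝ} {j : ℕ} (h : ∀ i < j, y i = z i) : walk y j = walk z j :=
  sum_congr rfl fun i hi => h i (mem_range.mp hi)

theorem walk_add (y : ℕ → ℝ) (k j : ℕ) :
    walk y (k + j) = walk y k + walk (fun i => y (k + i)) j :=
  sum_range_add _ _ _

theorem reverse_injective (k : ℕ) : (reverse k).Injective := by
  intro a b h
  simp only [reverse] at h
  split_ifs at h <;> omega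

theorem walk_reverse (y : ℕ → ℝ) {j k : ℕ} (hj : j ≤ k) :
    walk (fun i => y (reverse k i)) j = walk y k - walk y (k - j) := by
  obtain ⟨m, rfl⟩ := Nat.exists_eq_add_of_le hj
  have hreflect : ∀ l, walk y l = ∑ i ∈ range l, y (l - 1 - i) := fun l =>
    (sum_range_reflect y l).symm
  rw [Nat.add_sub_cancel_left, eq_sub_iff_add_eq, hreflect, hreflect, sum_range_add]
  congr 1
  · exact sum_congr rfl fun i hi => by simp [reverse, (mem_range.mp hi).trans_le hj]
  · exact sum_congr rfl fun i hi => by congr 1; omega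

section
variable (μ : Measure ℝ) [IsProbabilityMeasure μ]

theorem measure_recordAt (k : ℕ) :
    infinitePi (fun _ => μ) (recordAt k) = infinitePi (fun _ => μ) (stayPos k) := by
  have hpre : (fun y i => y (reverse k i)) ⁻¹' stayPos k = recordAt k := by
    ext y
    simp only [Set.mem_preimage, stayPos, recordAt, Set.mem_ofPred_eq]
    constructor
    · intro h j hj
      have := h (k - j) (by omega) (by omega)
      rw [walk_reverse y (by omega), Nat.sub_sub_self hj.le] at this
      linarith
    · intro h j hj hjk
      rw [walk_reverse y hjk]
      linarith [h (k - j) (by omega)]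
  rw [← hpre]
  exact (measurePreserving_infinitePi_comp μ (reverse_injective k)).measure_preimage
    (measurableSet_stayPos k).nullMeasurableSet

theorem measure_preimage_negShift_stayPos [μ.IsNegInvariant] (k m : ℕ) :
    infinitePi (fun _ => μ) ((fun y i => -y (k + i)) ⁻¹' stayPos m) =
      infinitePi (fun _ => μ) (stayPos m) :=
  ((measurePreserving_neg_infinitePi μ).comp
    (measurePreserving_infinitePi_comp μ (add_right_injective k))).measure_preimage
    (measurableSet_stayPos m).nullMeasurableSet

theorem argmaxAt_eq_inter {n k : ℕ} (hk : k ≤ n) :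
    argmaxAt n k = recordAt k ∩ (fun y i => -y (k + i)) ⁻¹' stayPos (n - k) := by
  ext y
  have hfuture : ∀ j, walk (fun i => -y (k + i)) j = walk y k - walk y (k + j) := by
    intro j
    rw [walk_add]
    simp only [walk, sum_neg_distrib]
    ring
  simp only [argmaxAt, recordAt, stayPos, Set.mem_inter_iff, Set.mem_preimage,
    Set.mem_ofPred_eq, hfuture, sub_pos]
  constructor
  · intro h
    exact ⟨fun j hj => h j (by omega) hj.ne, fun j hj hjn => h (k + j) (by omega) (by omega)⟩
  · rintro ⟨hpast, hfut⟩ j hjn hjk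
    rcases lt_or_gt_of_ne hjk with hlt | hgt
    · exact hpast j hlt
    · obtain ⟨i, rfl⟩ := Nat.exists_eq_add_of_lt hgt
      exact hfut (i + 1) (by omega) (by omega)

theorem measure_argmaxAt [μ.IsNegInvariant] {n k : ℕ} (hk : k ≤ n) :
    infinitePi (fun _ => μ) (argmaxAt n k) =
      infinitePi (fun _ => μ) (stayPos k) * infinitePi (fun _ => μ) (stayPos (n - k)) := by
  rw [argmaxAt_eq_inter hk, infinitePi_inter_eq_mul μ (s := Set.Iio k) (t := Set.Ici k)
      (Set.Iio_disjoint_Ici le_rfl) (measurableSet_recordAt k)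
      ((measurableSet_stayPos _).preimage (by fun_prop)),
    measure_recordAt, measure_preimage_negShift_stayPos]
  · intro y
    have h : ∀ j ≤ k, walk ((Set.Iio k).indicator y) j = walk y j := fun j hj =>
      walk_congr fun i hi => Set.indicator_of_mem (Set.mem_Iio.mpr (hi.trans_le hj)) y
    simp only [recordAt, Set.mem_ofPred_eq, h k le_rfl]
    exact forall₂_congr fun j hj => by rw [h j hj.le]
  · intro y
    simp [Set.indicator_of_mem]

theorem measure_setOf_walk_eq_eq_zero [NullSingletonClass μ] {j k : ℕ} (hjk : j < k) :
    infinitePi (fun _ => μ) {y | walk y j = walk y k} = 0 := by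
  have hsplit : ∀ y, walk y k = walk y j + y j + ∑ i ∈ Ico (j + 1) k, y i := fun y => by
    rw [walk, ← sum_range_add_sum_Ico _ hjk, sum_range_succ]
    rfl
  have hindep : IndepFun (fun y => -∑ i ∈ Ico (j + 1) k, y i) (fun y : ℕ → ℝ => y j)
      (infinitePi fun _ => μ) := by
    have := (iIndepFun_infinitePi (P := fun _ => μ) (X := fun _ x => x)
      fun _ => measurable_id).indepFun_finsetSum_of_notMem (fun i => measurable_pi_apply i)
      (s := Ico (j + 1) k) (i := j) (by simp)
    have hfun : (fun y : ℕ → ℝ => -∑ i ∈ Ico (j + 1) k, y i) =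
        Neg.neg ∘ ∑ i ∈ Ico (j + 1) k, fun y => y i := by
      ext y
      simp [Finset.sum_apply]
    rw [hfun]
    exact this.comp measurable_neg measurable_id
  have : NullSingletonClass ((infinitePi fun _ => μ).map fun y => y j) := by
    rw [infinitePi_map_eval]
    infer_instance
  convert hindep.measure_setOf_eq_eq_zero (by fun_prop) (measurable_pi_apply j) using 2
  ext y
  simp only [Set.mem_ofPred_eq, hsplit]
  constructor <;> intro <;> linarith

theorem exists_walk_eq_of_notMem_argmaxAt {n : ℕ} {y : ℕ → ℝ}
    (hy : y ∉ ⋃ k ∈ range (n + 1), argmaxAt n k) : ∃ j k, j < k ∧ walk y j = walk y k := by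
  obtain ⟨k, hk, hmax⟩ := exists_max_image (range (n + 1)) (walk y) nonempty_range_add_one
  simp only [Set.mem_iUnion, not_exists] at hy
  obtain ⟨j, hjn, hjk, hle⟩ : ∃ j ≤ n, j ≠ k ∧ walk y k ≤ walk y j := by
    simpa [argmaxAt] using hy k hk
  have heq := le_antisymm (hmax j (by simpa [Nat.lt_succ_iff] using hjn)) hle
  rcases lt_or_gt_of_ne hjk with hlt | hgt
  · exact ⟨j, k, hlt, heq⟩
  · exact ⟨k, j, hgt, heq.symm⟩

theorem sum_measure_argmaxAt [NullSingletonClass μ] (n : ℕ) :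
    ∑ k ∈ range (n + 1), infinitePi (fun _ => μ) (argmaxAt n k) = 1 := by
  have hdisj : Set.PairwiseDisjoint (range (n + 1) : Set ℕ) (argmaxAt n) := by
    intro k hk k' hk' hne
    simp only [coe_range, Set.mem_Iio] at hk hk'
    refine Set.disjoint_left.mpr fun y hy hy' => ?_
    linarith [hy k' (by omega) hne.symm, hy' k (by omega) hne]
  rw [← measure_biUnion_finset hdisj fun k _ => measurableSet_argmaxAt n k,
    ← prob_compl_eq_zero_iff
      (Finset.measurableSet_biUnion _ fun k _ => measurableSet_argmaxAt n k)]
  refine measure_mono_null (fun y hy => ?_)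
    (measure_iUnion_null fun j => measure_iUnion_null fun k =>
      measure_iUnion_null fun (hjk : j < k) => measure_setOf_walk_eq_eq_zero μ hjk)
  obtain ⟨j, k, hjk, heq⟩ := exists_walk_eq_of_notMem_argmaxAt hy
  simp only [Set.mem_iUnion]
  exact ⟨j, k, hjk, heq⟩

theorem sum_antidiagonal_measure_stayPos [μ.IsNegInvariant] [NullSingletonClass μ] (n : ℕ) :
    ∑ p ∈ antidiagonal n, infinitePi (fun _ => μ) (stayPos p.1) *
      infinitePi (fun _ => μ) (stayPos p.2) = 1 := by
  rw [Nat.sum_antidiagonal_eq_sum_range_succ_mk, ← sum_measure_argmaxAt μ n]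
  exact sum_congr rfl fun k hk => (measure_argmaxAt μ (Nat.lt_succ_iff.mp (mem_range.mp hk))).symm

theorem toReal_measure_stayPos [μ.IsNegInvariant] [NullSingletonClass μ] (n : ℕ) :
    (infinitePi (fun _ => μ) (stayPos n)).toReal = n.centralBinom / 4 ^ n := by
  set r : ℕ → ℝ := fun m => (infinitePi (fun _ => μ) (stayPos m)).toReal
  have hr : PowerSeries.mk r = PowerSeries.mk fun m => (m.centralBinom : ℝ) / 4 ^ m := by
    refine PowerSeries.eq_of_mul_self_eq_mul_self ?_ ?_ (by simp)
    · ext m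
      have h := congrArg ENNReal.toReal (sum_antidiagonal_measure_stayPos μ m)
      rw [ENNReal.toReal_sum fun _ _ => ENNReal.mul_ne_top (measure_ne_top _ _)
        (measure_ne_top _ _)] at h
      simpa [PowerSeries.mul_self_mk_centralBinom_div_four_pow, PowerSeries.coeff_mul, r] using h
    · simp [r, stayPos_zero]
  simpa using congrArg (PowerSeries.coeff n) hr

end

end SymmetricWalk

theorem symmetric_walk_stays_positive_general {Ω : Type*} [MeasurableSpace Ω] (P : Measure Ω)
    (μ : Measure ℝ) [IsProbabilityMeasure μ]
    (hsym : ∀ B : Set ℝ, MeasurableSet B → μ ((fun x => -x) ⁻¹' B) = μ B)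
    (hcont : ∀ x : ℝ, μ {x} = 0)
    (X : ℕ → Ω → ℝ)
    (hmeas : ∀ j, Measurable (X j))
    (hdist : ∀ j, Measure.map (X j) P = μ)
    (hind : iIndepFun X P)
    (n : ℕ) :
    (P {ω | ∀ j, 1 ≤ j → j ≤ n → 0 < ∑ i ∈ Finset.range j, X i ω}).toReal =
      ((2 * n).choose n : ℝ) / 2 ^ (2 * n) := by
  have : μ.IsNegInvariant := ⟨Measure.ext fun B hB => by
    rw [Measure.neg_def, map_apply measurable_neg hB]
    exact hsym B hB⟩
  have : NullSingletonClass μ := ⟨hcont⟩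
  have hlaw : P.map (fun ω i => X i ω) = infinitePi fun _ => μ := by
    rw [hind.map_fun_eq_infinitePi_map hmeas]
    simp_rw [hdist]
  change (P ((fun ω i => X i ω) ⁻¹' SymmetricWalk.stayPos n)).toReal = _
  rw [← map_apply (measurable_pi_iff.mpr hmeas) (SymmetricWalk.measurableSet_stayPos n), hlaw,
    SymmetricWalk.toReal_measure_stayPos, Nat.centralBinom_eq_two_mul_choose, pow_mul]
  norm_num

/-- Probability that a symmetric random walk stays positive: for i.i.d. steps with
symmetric continuous common distribution `μ` and partial sums `Sⱼ = X₀ + ⋯ + X_{j-1}`,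
one has `P(S₁ > 0, …, Sₙ > 0) = C(2n,n) / 2^{2n}`. -/
theorem symmetric_walk_stays_positive {Ω : Type*} [MeasurableSpace Ω] (P : Measure Ω)
    [IsProbabilityMeasure P] (μ : Measure ℝ) [IsProbabilityMeasure μ]
    (hsym : ∀ B : Set ℝ, MeasurableSet B → μ ((fun x => -x) ⁻¹' B) = μ B)
    (hcont : ∀ x : ℝ, μ {x} = 0)
    (X : ℕ → Ω → ℝ)
    (hmeas : ∀ j, Measurable (X j))
    (hdist : ∀ j, Measure.map (X j) P = μ)
    (hind : iIndepFun X P)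
    (n : ℕ) (hn : 1 ≤ n) :
    (P {ω | ∀ j, 1 ≤ j → j ≤ n → 0 < ∑ i ∈ Finset.range j, X i ω}).toReal =
      ((2 * n).choose n : ℝ) / 2 ^ (2 * n) :=
  symmetric_walk_stays_positive_general P μ hsym hcont X hmeas hdist hind n
end

section
/- Sparre-Andersen combinatorial lemma: let n ≥ 1 and let x_1, ..., x_n be real numbers. For a permutation σ of {1,...,n}, let s^σ_0 = 0 and s^σ_j = x_{σ(1)} + ... + x_{σ(j)} for 1 ≤ j ≤ n, and say the first maximum of the partial sums occurs at index j ∈ {0,...,n} if s^σ_j > s^σ_i for all 0 ≤ i < j and s^σ_j ≥ s^σ_i for all j < i ≤ n. Then for every integer r with 0 ≤ r ≤ n, the number of permutations σ of {1,...,n} for which exactly r of the partial sums s^σ_1, ..., s^σ_n are strictly positive equals the number of permutations σ of {1,...,n} for which the first maximum of the partial sums occurs at index r. -/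
/-- The `j`-th partial sum `s^σ_j = x_{σ(1)} + ⋯ + x_{σ(j)}` of the sequence
`x` permuted by `σ` (with `s^σ_0 = 0`). -/
def permPartialSum {n : ℕ} (x : Fin n → ℝ) (σ : Equiv.Perm (Fin n)) (j : ℕ) : ℝ :=
  ∑ i ∈ Finset.univ.filter (fun i : Fin n => (i : ℕ) < j), x (σ i)

/-!
Scan the word `(σ 0, …, σ (n - 1))` from left to right, sending a letter to a list `u` when the
partial sum ending at it is positive and to a list `v` otherwise. Every nonempty prefix of `u`
has positive sum and every prefix of `v` has nonpositive sum, so the partial sums of the word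
`u.reverse ++ v` have their first maximum at `u.length`, the number of positive partial sums of
the original word. The split is injective (the last letter lies in `u` exactly when the total sum
is positive), so for each `r` this rearrangement injects the permutations with `r` positive
partial sums into those whose first maximum is at `r`. Both families partition the permutations
as `r` varies, hence all these injections are bijections.
-/

open List
open scoped Finset

theorem Nat.card_eq_of_forall_card_le_of_existsUnique {α β : Type*} [Finite α]
    {P Q : β → α → Prop} (hP : ∀ a, ∃! b, P b a) (hQ : ∀ a, ∃! b, Q b a)
    (hle : ∀ b, Nat.card {a // P b a} ≤ Nat.card {a // Q b a}) (b : β) :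
    Nat.card {a // P b a} = Nat.card {a // Q b a} := by
  classical
  have := Fintype.ofFinite α
  choose p hp hpu using hP
  choose q hq hqu using hQ
  have hPp : ∀ c, Nat.card {a // P c a} = #{a | p a = c} := fun c => by
    rw [Nat.card_eq_fintype_card, Fintype.card_subtype]
    exact congrArg _ (Finset.filter_congr fun a _ => ⟨fun h => (hpu a c h).symm, (· ▸ hp a)⟩)
  have hQq : ∀ c, Nat.card {a // Q c a} = #{a | q a = c} := fun c => by
    rw [Nat.card_eq_fintype_card, Fintype.card_subtype]
    exact congrArg _ (Finset.filter_congr fun a _ => ⟨fun h => (hqu a c h).symm, (· ▸ hq a)⟩)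
  let S := insert b (Finset.univ.image p ∪ Finset.univ.image q)
  have hsum : ∑ c ∈ S, #{a | p a = c} = ∑ c ∈ S, #{a | q a = c} := by
    rw [← Finset.card_eq_sum_card_fiberwise (t := S) (fun a _ => by simp [S]),
      ← Finset.card_eq_sum_card_fiberwise (t := S) (f := q) (fun a _ => by simp [S])]
  rw [hPp, hQq]
  refine (Finset.sum_eq_sum_iff_of_le fun c _ => ?_).1 hsum b (Finset.mem_insert_self _ _)
  rw [← hPp, ← hQq]
  exact hle c

def IsFirstMaxAt (s : ℕ → ℝ) (n r : ℕ) : Prop :=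
  (∀ i, i < r → s i < s r) ∧ ∀ i, i ≤ n → s i ≤ s r

section FirstMax

variable {s : ℕ → ℝ} {n : ℕ}

theorem IsFirstMaxAt.le (hs : ∀ j, n ≤ j → s j = s n) {r : ℕ} (h : IsFirstMaxAt s n r) :
    r ≤ n := by
  by_contra! hr
  exact (h.1 n hr).ne (hs r hr.le).symm

theorem IsFirstMaxAt.eq (hs : ∀ j, n ≤ j → s j = s n) {r r' : ℕ} (h : IsFirstMaxAt s n r)
    (h' : IsFirstMaxAt s n r') : r = r' := by
  rcases lt_trichotomy r r' with hlt | heq | hgt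
  · linarith [h'.1 r hlt, h.2 r' (h'.le hs)]
  · exact heq
  · linarith [h.1 r' hgt, h'.2 r (h.le hs)]

theorem existsUnique_isFirstMaxAt (hs : ∀ j, n ≤ j → s j = s n) :
    ∃! r, IsFirstMaxAt s n r := by
  classical
  have hmax : ∃ j, j ≤ n ∧ ∀ i, i ≤ n → s i ≤ s j := by
    obtain ⟨j, hj, hjmax⟩ := (Finset.range (n + 1)).exists_max_image s ⟨0, by simp⟩
    exact ⟨j, by simpa [Nat.lt_succ_iff] using hj,
      fun i hi => hjmax i (by simpa [Nat.lt_succ_iff])⟩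
  obtain ⟨hrn, hr⟩ := Nat.find_spec hmax
  have hfirst : IsFirstMaxAt s n (Nat.find hmax) :=
    ⟨fun i hi => (hr i (hi.le.trans hrn)).lt_of_ne fun heq =>
      Nat.find_min hmax hi ⟨hi.le.trans hrn, fun k hk => heq ▸ hr k hk⟩, hr⟩
  exact ⟨_, hfirst, fun r' h' => h'.eq hs hfirst⟩

end FirstMax

section Split

variable {α : Type*} (f : α → ℝ)

-- `c` is the sum of the letters already scanned: a letter goes to the left list iff the partial
-- sum ending at it is positive.
noncomputable def splitByPartialSum : ℝ → List α → List α × List α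
  | _, [] => ([], [])
  | c, a :: t =>
    let p := splitByPartialSum (c + f a) t
    if 0 < c + f a then (a :: p.1, p.2) else (p.1, a :: p.2)

@[simp]
theorem splitByPartialSum_nil (c : ℝ) : splitByPartialSum f c [] = ([], []) := rfl

theorem splitByPartialSum_append_singleton (c : ℝ) (t : List α) (a : α) :
    splitByPartialSum f c (t ++ [a]) =
      if 0 < c + (t.map f).sum + f a then
        ((splitByPartialSum f c t).1 ++ [a], (splitByPartialSum f c t).2)
      else ((splitByPartialSum f c t).1, (splitByPartialSum f c t).2 ++ [a]) := by
  induction t generalizing c with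
  | nil => simp [splitByPartialSum]
  | cons b t ih =>
    simp only [cons_append, splitByPartialSum, ih, map_cons, sum_cons, ← add_assoc]
    split_ifs <;> simp

theorem perm_splitByPartialSum (c : ℝ) (l : List α) :
    (splitByPartialSum f c l).1 ++ (splitByPartialSum f c l).2 ~ l := by
  induction l generalizing c with
  | nil => simp
  | cons a t ih =>
    simp only [splitByPartialSum]
    split_ifs
    · exact (ih _).cons a
    · exact perm_middle.trans ((ih _).cons a)

theorem sum_map_splitByPartialSum (c : ℝ) (l : List α) :
    ((splitByPartialSum f c l).1.map f).sum + ((splitByPartialSum f c l).2.map f).sum =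
      (l.map f).sum := by
  simpa using ((perm_splitByPartialSum f c l).map f).sum_eq

theorem splitByPartialSum_prefix_sums (l : List α) :
    (∀ j, 0 < j → j ≤ (splitByPartialSum f 0 l).1.length →
      0 < (((splitByPartialSum f 0 l).1.take j).map f).sum) ∧
    ∀ j, (((splitByPartialSum f 0 l).2.take j).map f).sum ≤ 0 := by
  induction l using List.reverseRecOn with
  | nil => simp; omega
  | append_singleton t a ih =>
    rw [splitByPartialSum_append_singleton, zero_add]
    obtain ⟨hu, hv⟩ := ih
    set u := (splitByPartialSum f 0 t).1
    set v := (splitByPartialSum f 0 t).2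
    have hsum : (u.map f).sum + (v.map f).sum = (t.map f).sum :=
      sum_map_splitByPartialSum f 0 t
    have hv_total : (v.map f).sum ≤ 0 := by simpa using hv v.length
    have hu_total : 0 ≤ (u.map f).sum := by
      rcases Nat.eq_zero_or_pos u.length with h | h
      · simp [eq_nil_of_length_eq_zero h]
      · simpa using (hu _ h le_rfl).le
    split_ifs with hpos
    · refine ⟨fun j hj0 hj => ?_, hv⟩
      rw [length_append, length_singleton] at hj
      rcases hj.lt_or_eq with hj | rfl
      · rw [take_append_of_le_length (by omega)]
        exact hu j hj0 (by omega)
      · rw [take_of_length_le (by simp), map_append, sum_append]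
        simp only [map_singleton, sum_singleton]
        linarith
    · refine ⟨hu, fun j => ?_⟩
      rcases le_or_gt j v.length with hj | hj
      · rw [take_append_of_le_length hj]
        exact hv j
      · rw [take_of_length_le (by simp; omega), map_append, sum_append]
        simp only [map_singleton, sum_singleton]
        linarith

theorem length_fst_splitByPartialSum (l : List α) :
    (splitByPartialSum f 0 l).1.length =
      #{j ∈ Finset.Icc 1 l.length | 0 < ((l.take j).map f).sum} := by
  induction l using List.reverseRecOn with
  | nil => simp
  | append_singleton t a ih =>
    have hIcc : Finset.Icc 1 (t.length + 1) = insert (t.length + 1) (Finset.Icc 1 t.length) := by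
      ext j; simp; omega
    have hfilter : {j ∈ Finset.Icc 1 t.length | 0 < (((t ++ [a]).take j).map f).sum} =
        {j ∈ Finset.Icc 1 t.length | 0 < ((t.take j).map f).sum} :=
      Finset.filter_congr fun j hj => by
        rw [take_append_of_le_length (Finset.mem_Icc.1 hj).2]
    rw [splitByPartialSum_append_singleton, length_append, length_singleton, hIcc,
      Finset.filter_insert, hfilter, take_of_length_le (by simp), zero_add]
    simp only [map_append, sum_append, map_singleton, sum_singleton]
    split_ifs
    · rw [Finset.card_insert_of_notMem (by simp), length_append, ih, length_singleton]
    · exact ih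

theorem splitByPartialSum_injective :
    Function.Injective (splitByPartialSum f 0 : List α → List α × List α) := by
  intro l₁
  induction l₁ using List.reverseRecOn with
  | nil =>
    intro l₂ h
    have := (perm_splitByPartialSum f 0 l₂).length_eq
    rw [← h] at this
    simpa [eq_comm] using this
  | append_singleton t₁ a₁ ih =>
    intro l₂ h
    have hsum := sum_map_splitByPartialSum f 0 (t₁ ++ [a₁])
    rw [h, sum_map_splitByPartialSum] at hsum
    rcases l₂.eq_nil_or_concat' with rfl | ⟨t₂, a₂, rfl⟩
    · have := (perm_splitByPartialSum f 0 (t₁ ++ [a₁])).length_eq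
      simp_all
    simp only [map_append, sum_append, map_singleton, sum_singleton] at hsum
    rw [splitByPartialSum_append_singleton, splitByPartialSum_append_singleton, zero_add,
      zero_add, hsum] at h
    split_ifs at h
    · simp only [Prod.mk.injEq, append_singleton_inj] at h
      obtain ⟨⟨hu, rfl⟩, hv⟩ := h
      rw [ih (Prod.ext hu hv)]
    · simp only [Prod.mk.injEq, append_singleton_inj] at h
      obtain ⟨hu, hv, rfl⟩ := h
      rw [ih (Prod.ext hu hv)]

theorem isFirstMaxAt_reverse_append {u v : List α}
    (hu : ∀ j, 0 < j → j ≤ u.length → 0 < ((u.take j).map f).sum)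
    (hv : ∀ j, ((v.take j).map f).sum ≤ 0) (n : ℕ) :
    IsFirstMaxAt (fun j => (((u.reverse ++ v).take j).map f).sum) n u.length := by
  set S : ℕ → ℝ := fun j => (((u.reverse ++ v).take j).map f).sum with hS
  have hu₀ : ∀ j, j ≤ u.length → 0 ≤ ((u.take j).map f).sum := fun j hj => by
    rcases j.eq_zero_or_pos with rfl | hj₀
    · simp
    · exact (hu j hj₀ hj).le
  have hle : ∀ i, i ≤ u.length → S u.length = S i + ((u.take (u.length - i)).map f).sum := by
    intro i hi
    simp only [hS]
    rw [take_left' length_reverse, take_append_of_le_length (by simpa using hi)]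
    conv_lhs => rw [← take_append_drop i u.reverse]
    rw [map_append, sum_append, drop_reverse, map_reverse, sum_reverse]
  have hge : ∀ i, u.length ≤ i → S i = S u.length + ((v.take (i - u.length)).map f).sum := by
    intro i hi
    simp only [hS]
    rw [take_left' length_reverse, take_append, take_of_length_le (by simpa using hi),
      length_reverse, map_append, sum_append]
  refine ⟨fun i hi => ?_, fun i _ => ?_⟩
  · rw [hle i hi.le]
    linarith [hu (u.length - i) (by omega) (by omega)]
  · rcases le_total i u.length with hi | hi
    · rw [hle i hi]
      linarith [hu₀ (u.length - i) (by omega)]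
    · rw [hge i hi]
      linarith [hv (i - u.length)]

noncomputable def rearrangeByPartialSum (l : List α) : List α :=
  (splitByPartialSum f 0 l).1.reverse ++ (splitByPartialSum f 0 l).2

theorem rearrangeByPartialSum_perm (l : List α) : rearrangeByPartialSum f l ~ l :=
  ((reverse_perm _).append_right _).trans (perm_splitByPartialSum f 0 l)

theorem isFirstMaxAt_rearrangeByPartialSum (l : List α) (n : ℕ) :
    IsFirstMaxAt (fun j => (((rearrangeByPartialSum f l).take j).map f).sum) n
      (splitByPartialSum f 0 l).1.length :=
  isFirstMaxAt_reverse_append f (splitByPartialSum_prefix_sums f l).1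
    (splitByPartialSum_prefix_sums f l).2 n

theorem eq_of_rearrangeByPartialSum_eq {l₁ l₂ : List α}
    (hlen : (splitByPartialSum f 0 l₁).1.length = (splitByPartialSum f 0 l₂).1.length)
    (h : rearrangeByPartialSum f l₁ = rearrangeByPartialSum f l₂) : l₁ = l₂ := by
  obtain ⟨hu, hv⟩ := append_inj h (by simpa using hlen)
  exact splitByPartialSum_injective f (Prod.ext (reverse_injective hu) hv)

end Split

theorem Equiv.Perm.exists_ofFn_eq_of_perm {n : ℕ} {σ : Equiv.Perm (Fin n)} {l : List (Fin n)}
    (h : l ~ ofFn σ) : ∃ τ : Equiv.Perm (Fin n), ofFn τ = l := by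
  have hlen : l.length = n := by simpa using h.length_eq
  have hnd : l.Nodup := h.nodup_iff.2 (nodup_ofFn.2 σ.injective)
  have hmem : ∀ a, a ∈ l := fun a => h.mem_iff.2 (mem_ofFn.2 ⟨σ.symm a, by simp⟩)
  refine ⟨(finCongr hlen.symm).trans (hnd.getEquivOfForallMemList l hmem), ?_⟩
  apply ext_get (by simp [hlen])
  intro i _ _
  simp

section Perm

variable {n : ℕ} (x : Fin n → ℝ) (σ : Equiv.Perm (Fin n))

theorem permPartialSum_eq_sum_take (j : ℕ) :
    permPartialSum x σ j = (((ofFn σ).take j).map x).sum := by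
  rw [map_take, map_ofFn, sum_take_ofFn]
  rfl

theorem permPartialSum_eq_of_le {j : ℕ} (hj : n ≤ j) :
    permPartialSum x σ j = permPartialSum x σ n := by
  rw [permPartialSum_eq_sum_take, permPartialSum_eq_sum_take,
    take_of_length_le (by simpa using hj), take_of_length_le (by simp)]

theorem ncard_pos_permPartialSum :
    {j | 1 ≤ j ∧ j ≤ n ∧ 0 < permPartialSum x σ j}.ncard =
      (splitByPartialSum x 0 (ofFn σ)).1.length := by
  rw [length_fst_splitByPartialSum, length_ofFn, ← Set.ncard_coe_finset]
  congr 1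
  ext j
  simp [permPartialSum_eq_sum_take, and_assoc]

end Perm

theorem sparre_andersen_combinatorial_lemma_general (n : ℕ) (x : Fin n → ℝ)
    (r : ℕ) :
    Nat.card {σ : Equiv.Perm (Fin n) //
        Set.ncard {j : ℕ | 1 ≤ j ∧ j ≤ n ∧ 0 < permPartialSum x σ j} = r} =
      Nat.card {σ : Equiv.Perm (Fin n) //
        (∀ i, i < r → permPartialSum x σ i < permPartialSum x σ r) ∧
        (∀ i, i ≤ n → permPartialSum x σ i ≤ permPartialSum x σ r)} := by
  refine Nat.card_eq_of_forall_card_le_of_existsUnique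
    (P := fun k σ => Set.ncard {j : ℕ | 1 ≤ j ∧ j ≤ n ∧ 0 < permPartialSum x σ j} = k)
    (Q := fun k σ => IsFirstMaxAt (permPartialSum x σ) n k)
    (fun _ => existsUnique_eq')
    (fun σ => existsUnique_isFirstMaxAt fun _ => permPartialSum_eq_of_le x σ) (fun k => ?_) r
  choose τ hτ using fun σ : Equiv.Perm (Fin n) =>
    Equiv.Perm.exists_ofFn_eq_of_perm (rearrangeByPartialSum_perm x (ofFn σ))
  refine Nat.card_le_card_of_injective (fun σ => ⟨τ σ, ?_⟩) fun σ₁ σ₂ h => Subtype.ext ?_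
  · have h := isFirstMaxAt_rearrangeByPartialSum x (ofFn σ.1) n
    rw [← ncard_pos_permPartialSum, σ.2] at h
    convert h using 1
    ext j
    rw [permPartialSum_eq_sum_take, hτ]
  · refine DFunLike.coe_injective (ofFn_injective (eq_of_rearrangeByPartialSum_eq x ?_ ?_))
    · rw [← ncard_pos_permPartialSum, ← ncard_pos_permPartialSum, σ₁.2, σ₂.2]
    · rw [← hτ, ← hτ, show τ σ₁ = τ σ₂ from congrArg Subtype.val h]

/-- Sparre-Andersen combinatorial lemma: for fixed real numbers `x₁,…,xₙ` and
`0 ≤ r ≤ n`, the number of permutations `σ` for which exactly `r` of the partial sums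
`s^σ_1,…,s^σ_n` are strictly positive equals the number of permutations `σ` for which the
first maximum of the partial sums `s^σ_0,…,s^σ_n` occurs at index `r` (i.e. `s^σ_r > s^σ_i`
for `i < r` and `s^σ_r ≥ s^σ_i` for `i > r`). -/
theorem sparre_andersen_combinatorial_lemma (n : ℕ) (hn : 1 ≤ n) (x : Fin n → ℝ)
    (r : ℕ) (hr : r ≤ n) :
    Nat.card {σ : Equiv.Perm (Fin n) //
        Set.ncard {j : ℕ | 1 ≤ j ∧ j ≤ n ∧ 0 < permPartialSum x σ j} = r} =
      Nat.card {σ : Equiv.Perm (Fin n) //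
        (∀ i, i < r → permPartialSum x σ i < permPartialSum x σ r) ∧
        (∀ i, i ≤ n → permPartialSum x σ i ≤ permPartialSum x σ r)} :=
  sparre_andersen_combinatorial_lemma_general n x r
end

section
/- Two-colorability of bounded set systems (Property B bound): let k ≥ 2 and let F be a finite family of N finite sets, each of cardinality exactly k (the sets need not be disjoint). If N · (1/2)^{k−1} < 1 (equivalently, N < 2^{k−1}), then there exists a two-coloring of the elements of the union of the sets in F (a function from the union to a two-element set of colors) such that no set in F is monochromatic, i.e. every set in F contains elements of both colors. -/
open Finset

/-- Counting lemma: the number of Bool-valued functions on a fintype that are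
constantly `b` on a finset `s` is `2 ^ (card β - s.card)`. -/
lemma count_const_on {β : Type*} [Fintype β] [DecidableEq β] (s : Finset β) (b : Bool) :
    (Finset.univ.filter fun g : β → Bool => ∀ x ∈ s, g x = b).card
      = 2 ^ (Fintype.card β - s.card) := by
  classical
  have e : {g : β → Bool // ∀ x ∈ s, g x = b} ≃ ({x : β // x ∉ s} → Bool) :=
    { toFun := fun g x => g.1 x.1
      invFun := fun h => ⟨fun x => if hx : x ∈ s then b else h ⟨x, hx⟩,
        fun x hx => dif_pos hx⟩
      left_inv := fun g => Subtype.ext (funext fun x => by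
        by_cases hx : x ∈ s
        · simp [hx, g.2 x hx]
        · simp [hx])
      right_inv := fun h => funext fun x => dif_neg x.2 }
  have h1 : (Finset.univ.filter fun g : β → Bool => ∀ x ∈ s, g x = b).card
      = Fintype.card {g : β → Bool // ∀ x ∈ s, g x = b} := by
    rw [Fintype.card_subtype]
  rw [h1, Fintype.card_congr e, Fintype.card_fun, Fintype.card_bool]
  congr 1
  rw [Fintype.card_subtype_compl, Fintype.card_coe]

/-- Property B bound: if `F` is a finite family of `N` finite sets, each of cardinality
exactly `k ≥ 2`, and `N (1/2)^{k-1} < 1`, then there is a two-coloring of the elements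
(a function into the two-element type `Bool`) under which no set of `F` is monochromatic:
every set of `F` contains elements of both colors. -/
theorem property_B_bound {α : Type*} (k N : ℕ) (hk : 2 ≤ k)
    (F : Finset (Finset α)) (hF : F.card = N) (hsets : ∀ A ∈ F, A.card = k)
    (hbound : (N : ℝ) * (1 / 2) ^ (k - 1) < 1) :
    ∃ f : α → Bool, ∀ A ∈ F,
      (∃ a ∈ A, f a = true) ∧ (∃ a ∈ A, f a = false) := by
  classical
  rcases F.eq_empty_or_nonempty with rfl | hne
  · exact ⟨fun _ => true, by simp⟩
  obtain ⟨A₀, hA₀⟩ := hne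
  set U := F.sup id with hU
  have hsub : ∀ A ∈ F, A ⊆ U := fun A hA => Finset.le_sup (f := id) hA
  have hkU : k ≤ U.card := by
    rw [← hsets A₀ hA₀]; exact Finset.card_le_card (hsub A₀ hA₀)
  -- N < 2^(k-1)
  have h2 : (0:ℝ) < 2 ^ (k-1) := by positivity
  have hN : N < 2 ^ (k - 1) := by
    rw [one_div, inv_pow, ← div_eq_mul_inv, div_lt_one h2] at hbound
    exact_mod_cast hbound
  set β := {x : α // x ∈ U}
  have hcardβ : Fintype.card β = U.card := Fintype.card_coe U
  let A' : Finset α → Finset β := fun A => A.subtype (· ∈ U)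
  have hA'card : ∀ A ∈ F, (A' A).card = k := by
    intro A hA
    rw [Finset.card_subtype, Finset.filter_true_of_mem (fun x hx => hsub A hA hx),
      hsets A hA]
  let Bad : Finset α → Finset (β → Bool) := fun A =>
    Finset.univ.filter fun g => (∀ x ∈ A' A, g x = true) ∨ (∀ x ∈ A' A, g x = false)
  have hBadcard : ∀ A ∈ F, (Bad A).card ≤ 2 * 2 ^ (U.card - k) := by
    intro A hA
    have : Bad A ⊆ (Finset.univ.filter fun g : β → Bool => ∀ x ∈ A' A, g x = true)
        ∪ (Finset.univ.filter fun g : β → Bool => ∀ x ∈ A' A, g x = false) := by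
      intro g hg
      simp only [Bad, Finset.mem_filter, Finset.mem_union, Finset.mem_univ, true_and] at *
      tauto
    calc (Bad A).card ≤ _ := Finset.card_le_card this
      _ ≤ _ + _ := Finset.card_union_le _ _
      _ ≤ 2 * 2 ^ (U.card - k) := by
          rw [count_const_on, count_const_on, hA'card A hA, hcardβ]; ring_nf; omega
  have htotal : (F.biUnion Bad).card < 2 ^ U.card := by
    calc (F.biUnion Bad).card ≤ ∑ A ∈ F, (Bad A).card := Finset.card_biUnion_le
      _ ≤ ∑ A ∈ F, 2 * 2 ^ (U.card - k) := Finset.sum_le_sum hBadcard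
      _ = N * (2 * 2 ^ (U.card - k)) := by rw [Finset.sum_const, hF, smul_eq_mul]
      _ < 2 ^ (k - 1) * (2 * 2 ^ (U.card - k)) := by
          exact (Nat.mul_lt_mul_right (by positivity)).mpr hN
      _ = 2 ^ (k - 1 + 1 + (U.card - k)) := by ring
      _ = 2 ^ U.card := by congr 1; omega
  have hex : ∃ g : β → Bool, g ∉ F.biUnion Bad := by
    by_contra h
    push_neg at h
    have : (Finset.univ : Finset (β → Bool)).card ≤ (F.biUnion Bad).card :=
      Finset.card_le_card fun g _ => h g
    rw [Finset.card_univ, Fintype.card_fun, Fintype.card_bool, hcardβ] at this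
    omega
  obtain ⟨g, hg⟩ := hex
  refine ⟨fun a => if h : a ∈ U then g ⟨a, h⟩ else true, ?_⟩
  intro A hA
  have hgA : g ∉ Bad A := fun h => hg (Finset.mem_biUnion.mpr ⟨A, hA, h⟩)
  simp only [Bad, Finset.mem_filter, Finset.mem_univ, true_and, not_or] at hgA
  obtain ⟨h1, h2⟩ := hgA
  push_neg at h1 h2
  obtain ⟨x, hxA, hx⟩ := h1
  obtain ⟨y, hyA, hy⟩ := h2
  rw [Finset.mem_subtype] at hxA hyA
  constructor
  · refine ⟨y, hyA, ?_⟩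
    show (if h : ↑y ∈ U then g ⟨↑y, h⟩ else true) = true
    rw [dif_pos y.2]; simpa using hy
  · refine ⟨x, hxA, ?_⟩
    show (if h : ↑x ∈ U then g ⟨↑x, h⟩ else true) = false
    rw [dif_pos x.2]; simpa using hx
end
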